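/- arXiv:1212.6920 — 8 statements merged into one kernel-verified Lean document; each statement's English description precedes it below -/
import Mathlib

section
/- Let k, r ∈ ℕ, ζ ∈ ℝ with |ζ| < 1, and let (a₁,a₂,d,b,c) be a P²-ADHM datum at level ζ, regarded as complex linear maps a₁, a₂ : ℂ^k → ℂ^k, d : ℂ^k → ℂ^k, b : ℂ^r → ℂ^k, c : ℂ^k → ℂ^r. Then ker a₁* ∩ ker a₂* ∩ ker b* = 0 (equivalently, range a₁ + range a₂ + range b = ℂ^k), and ker a₁ ∩ ker a₂ ∩ ker c = 0. -/
open Matrix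

/-- A P²-ADHM datum at level `ζ`: matrices `a₁ a₂ d : k×k`, `b : k×r`, `c : r×k`
satisfying the integrability equation and the two moment map equations
`μ₀ = 0` and `μ₁ = ζ·1`. -/
def IsP2ADHM {k r : ℕ} (ζ : ℝ)
    (a₁ a₂ d : Matrix (Fin k) (Fin k) ℂ)
    (b : Matrix (Fin k) (Fin r) ℂ)
    (c : Matrix (Fin r) (Fin k) ℂ) : Prop :=
  a₁ * d * a₂ - a₂ * d * a₁ + b * c = 0 ∧
  a₁ * a₁ᴴ + a₂ * a₂ᴴ + b * bᴴ = 1 ∧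
  d * a₁ * (d * a₁)ᴴ - (d * a₁)ᴴ * (d * a₁) + d * a₂ * (d * a₂)ᴴ - (d * a₂)ᴴ * (d * a₂)
      - a₁ᴴ * a₁ - a₂ᴴ * a₂ + d * b * (d * b)ᴴ - cᴴ * c + 1
    = (ζ : ℂ) • (1 : Matrix (Fin k) (Fin k) ℂ)

/-- The real part of `⟪v, v⟫ = star v ⬝ᵥ v` is nonnegative. -/
lemma sq_re_nonneg' {n : ℕ} (v : Fin n → ℂ) : 0 ≤ (star v ⬝ᵥ v).re := by
  have h : star v ⬝ᵥ v = ∑ i, (Complex.normSq (v i) : ℂ) := by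
    simp [dotProduct, Pi.star_apply, Complex.star_def, ← Complex.normSq_eq_conj_mul_self]
  rw [h]
  simp only [Complex.re_sum, Complex.ofReal_re]
  exact Finset.sum_nonneg fun i _ => Complex.normSq_nonneg _

/-- The imaginary part of `star v ⬝ᵥ v` is zero. -/
lemma sq_im_zero' {n : ℕ} (v : Fin n → ℂ) : (star v ⬝ᵥ v).im = 0 := by
  have h : star v ⬝ᵥ v = ∑ i, (Complex.normSq (v i) : ℂ) := by
    simp [dotProduct, Pi.star_apply, Complex.star_def, ← Complex.normSq_eq_conj_mul_self]
  rw [h]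
  simp [Complex.im_sum]

/-- If `(star v ⬝ᵥ v).re = 0` then `v = 0`. -/
lemma vec_eq_zero_of_sq_re' {n : ℕ} (v : Fin n → ℂ) (h : (star v ⬝ᵥ v).re = 0) : v = 0 := by
  have hd : star v ⬝ᵥ v = ∑ i, (Complex.normSq (v i) : ℂ) := by
    simp [dotProduct, Pi.star_apply, Complex.star_def, ← Complex.normSq_eq_conj_mul_self]
  rw [hd] at h
  simp only [Complex.re_sum, Complex.ofReal_re] at h
  have := (Finset.sum_eq_zero_iff_of_nonneg
    (fun i _ => Complex.normSq_nonneg (v i))).mp h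
  funext i
  exact Complex.normSq_eq_zero.mp (this i (Finset.mem_univ i))

/-- `⟪x, M Mᴴ x⟫ = ⟪Mᴴ x, Mᴴ x⟫`. -/
lemma dot_MMH' {n m : ℕ} (M : Matrix (Fin n) (Fin m) ℂ) (x : Fin n → ℂ) :
    star x ⬝ᵥ (M * Mᴴ) *ᵥ x = star (Mᴴ *ᵥ x) ⬝ᵥ (Mᴴ *ᵥ x) := by
  rw [← mulVec_mulVec, dotProduct_mulVec, star_mulVec, conjTranspose_conjTranspose]

/-- For a P²-ADHM datum at level `ζ` with `|ζ| < 1`, both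
`ker a₁* ∩ ker a₂* ∩ ker b* = 0` and `ker a₁ ∩ ker a₂ ∩ ker c = 0`. -/
theorem stmt0 (k r : ℕ) (ζ : ℝ) (hζ : |ζ| < 1)
    (a₁ a₂ d : Matrix (Fin k) (Fin k) ℂ)
    (b : Matrix (Fin k) (Fin r) ℂ) (c : Matrix (Fin r) (Fin k) ℂ)
    (h : IsP2ADHM ζ a₁ a₂ d b c) :
    (LinearMap.ker a₁ᴴ.mulVecLin ⊓ LinearMap.ker a₂ᴴ.mulVecLin ⊓
        LinearMap.ker bᴴ.mulVecLin = ⊥) ∧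
    (LinearMap.ker a₁.mulVecLin ⊓ LinearMap.ker a₂.mulVecLin ⊓
        LinearMap.ker c.mulVecLin = ⊥) := by
  obtain ⟨-, h2, h3⟩ := h
  constructor
  · rw [Submodule.eq_bot_iff]
    intro x hx
    simp only [Submodule.mem_inf, LinearMap.mem_ker, mulVecLin_apply] at hx
    obtain ⟨⟨hx1, hx2⟩, hx3⟩ := hx
    have key := congrArg (fun M => M *ᵥ x) h2
    simpa [add_mulVec, ← mulVec_mulVec, hx1, hx2, hx3] using key.symm
  · rw [Submodule.eq_bot_iff]
    intro x hx
    simp only [Submodule.mem_inf, LinearMap.mem_ker, mulVecLin_apply] at hx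
    obtain ⟨⟨hx1, hx2⟩, hx3⟩ := hx
    have key := congrArg (fun M => star x ⬝ᵥ M *ᵥ x) h3
    simp only [add_mulVec, sub_mulVec, one_mulVec, smul_mulVec,
      dotProduct_add, dotProduct_sub, dotProduct_smul, smul_eq_mul,
      ← mulVec_mulVec, hx1, hx2, hx3, mulVec_zero, dotProduct_zero,
      sub_zero, add_zero] at key
    simp only [mulVec_mulVec, ← Matrix.mul_assoc] at key
    rw [dot_MMH', dot_MMH', dot_MMH'] at key
    have r1 := sq_re_nonneg' ((d * a₁)ᴴ *ᵥ x)
    have r2 := sq_re_nonneg' ((d * a₂)ᴴ *ᵥ x)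
    have r3 := sq_re_nonneg' ((d * b)ᴴ *ᵥ x)
    have r0 := sq_re_nonneg' x
    have i0 := sq_im_zero' x
    have keyre := congrArg Complex.re key
    simp only [Complex.add_re, Complex.mul_re, Complex.ofReal_re, Complex.ofReal_im,
      i0, mul_zero, zero_mul, sub_zero] at keyre
    have hz : ζ < 1 := lt_of_abs_lt hζ
    have h0 : (star x ⬝ᵥ x).re = 0 := by nlinarith
    exact vec_eq_zero_of_sq_re' x h0
end

section
/- Let k, r ∈ ℕ, ζ ∈ ℝ with ζ > 0, and let (a₁,a₂,d,b,c) be a P²-ADHM datum at level ζ, regarded as linear maps a₁, a₂ : W₁ → W₀, d : W₀ → W₁, b : ℂ^r → W₀, c : W₁ → ℂ^r, where W₀ = W₁ = ℂ^k. Then there exist no subspaces V₀' ⊆ W₀ and V₁' ⊆ W₁ such that V₀' ≠ W₀, dim V₀' = dim V₁', range b ⊆ V₀', d(V₀') ⊆ V₁', and aᵢ(V₁') ⊆ V₀' for i = 1, 2 (i.e., the non-degeneracy condition C1' automatically holds when ζ > 0). -/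
/-!
Let `P`, `Q` be the orthogonal projections onto `V₀'`, `V₁'` and `p = 1 - P`, `q = 1 - Q`; both
complements have trace `k - dim V₀' > 0`. Pair (iii) with `q`, writing `‖X‖² = re tr (X Xᴴ)`.
The invariance conditions give `p b = 0`, `q d b = 0`, `p aᵢ = p aᵢ q` and `q d aᵢ = q (d aᵢ) q`,
so `d aᵢ (d aᵢ)ᴴ - (d aᵢ)ᴴ d aᵢ` contributes `‖q d aᵢ q‖² - ‖d aᵢ q‖² ≤ 0`, and
`-a₁ᴴ a₁ - a₂ᴴ a₂` contributes at most `-‖p a₁‖² - ‖p a₂‖²`, which is `-tr p` by (ii).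
With `-cᴴ c ≤ 0` and `1` contributing `tr q`, this gives `ζ tr q ≤ tr q - tr p = 0`.
-/

open Matrix

namespace Matrix

section Field

variable {K : Type*} [Field K] {m n : Type*} [Fintype m] [Fintype n] [DecidableEq n]
  {P : Matrix n n K}

theorem IsIdempotentElem.mulVecLin (hP : IsIdempotentElem P) : IsIdempotentElem P.mulVecLin :=
  hP.map toLinAlgEquiv'

theorem IsIdempotentElem.trace_eq_finrank_range (hP : IsIdempotentElem P) :
    P.trace = Module.finrank K (LinearMap.range P.mulVecLin) := by
  rw [← (LinearMap.IsIdempotentElem.isProj_range _ hP.mulVecLin).trace]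
  exact (trace_toLin'_eq P).symm

theorem IsIdempotentElem.trace_one_sub (hP : IsIdempotentElem P) :
    (1 - P).trace = Fintype.card n - Module.finrank K (LinearMap.range P.mulVecLin) := by
  rw [trace_sub, trace_one, hP.trace_eq_finrank_range]

theorem IsIdempotentElem.mul_eq_self_of_range_le {M : Matrix n m K} (hP : IsIdempotentElem P)
    (h : LinearMap.range M.mulVecLin ≤ LinearMap.range P.mulVecLin) : P * M = M :=
  ext_iff_mulVec.mpr fun v => by
    rw [← mulVec_mulVec]
    exact (LinearMap.IsIdempotentElem.mem_range_iff hP.mulVecLin).mp (h ⟨v, rfl⟩)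

end Field

section RCLike

variable {𝕜 : Type*} [RCLike 𝕜] {m n : Type*} [Fintype m] [Fintype n]

noncomputable def frobeniusSq (A : Matrix m n 𝕜) : ℝ :=
  RCLike.re (A * Aᴴ).trace

open scoped ComplexOrder in
theorem frobeniusSq_nonneg (A : Matrix m n 𝕜) : 0 ≤ frobeniusSq A :=
  (RCLike.nonneg_iff.mp (posSemidef_self_mul_conjTranspose A).trace_nonneg).1

theorem frobeniusSq_conjTranspose (A : Matrix m n 𝕜) : frobeniusSq Aᴴ = frobeniusSq A := by
  rw [frobeniusSq, frobeniusSq, conjTranspose_conjTranspose, trace_mul_comm]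

variable {p : Matrix n n 𝕜}

theorem IsStarProjection.re_trace_mul_conjTranspose_mul (hp : IsStarProjection p)
    (A : Matrix n m 𝕜) : RCLike.re (A * Aᴴ * p).trace = frobeniusSq (p * A) := by
  have hpH : pᴴ = p := hp.isSelfAdjoint
  have hsandwich : p * A * (p * A)ᴴ = p * (A * Aᴴ * p) := by
    rw [conjTranspose_mul, hpH]
    simp only [Matrix.mul_assoc]
  rw [frobeniusSq, hsandwich, trace_mul_comm p, Matrix.mul_assoc _ p p, hp.isIdempotentElem.eq]

theorem IsStarProjection.re_trace_conjTranspose_mul_mul (hp : IsStarProjection p)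
    (A : Matrix m n 𝕜) : RCLike.re (Aᴴ * A * p).trace = frobeniusSq (A * p) := by
  have hpH : pᴴ = p := hp.isSelfAdjoint
  rw [← frobeniusSq_conjTranspose, conjTranspose_mul, hpH,
    ← hp.re_trace_mul_conjTranspose_mul, conjTranspose_conjTranspose]

variable [DecidableEq n]

theorem IsStarProjection.frobeniusSq_mul_left_le (hp : IsStarProjection p) (A : Matrix n m 𝕜) :
    frobeniusSq (p * A) ≤ frobeniusSq A := by
  have hsplit : frobeniusSq A = frobeniusSq (p * A) + frobeniusSq ((1 - p) * A) := by
    rw [← hp.re_trace_mul_conjTranspose_mul, ← hp.one_sub.re_trace_mul_conjTranspose_mul,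
      ← map_add, ← trace_add, ← Matrix.mul_add, add_sub_cancel, Matrix.mul_one, frobeniusSq]
  linarith [frobeniusSq_nonneg ((1 - p) * A)]

theorem IsStarProjection.frobeniusSq_mul_right_le (hp : IsStarProjection p) (A : Matrix m n 𝕜) :
    frobeniusSq (A * p) ≤ frobeniusSq A := by
  have hpH : pᴴ = p := hp.isSelfAdjoint
  rw [← frobeniusSq_conjTranspose, conjTranspose_mul, hpH, ← frobeniusSq_conjTranspose A]
  exact hp.frobeniusSq_mul_left_le Aᴴ

theorem exists_isStarProjection_range_mulVecLin_eq (V : Submodule 𝕜 (n → 𝕜)) :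
    ∃ P : Matrix n n 𝕜, IsStarProjection P ∧ LinearMap.range P.mulVecLin = V := by
  let e := WithLp.linearEquiv 2 𝕜 (n → 𝕜)
  let U := V.comap e.toLinearMap
  let Φ : Matrix n n 𝕜 ≃⋆ₐ[𝕜] (EuclideanSpace 𝕜 n →L[𝕜] EuclideanSpace 𝕜 n) := toEuclideanCLM
  refine ⟨Φ.symm U.starProjection, isStarProjection_starProjection.map Φ.symm.toStarAlgHom, ?_⟩
  have hconj : (Φ.symm U.starProjection).mulVecLin
      = e.toLinearMap ∘ₗ U.starProjection.toLinearMap ∘ₗ e.symm.toLinearMap :=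
    LinearMap.ext fun x => by
      simpa [Φ, e] using (ofLp_toEuclideanCLM (Φ.symm U.starProjection) (WithLp.toLp 2 x)).symm
  rw [hconj, LinearMap.range_comp, LinearMap.range_comp, LinearEquiv.range, Submodule.map_top]
  change Submodule.map e.toLinearMap U.starProjection.range = V
  rw [Submodule.range_starProjection]
  exact Submodule.map_comap_eq_of_surjective e.surjective V

end RCLike

end Matrix

section Moment

variable {𝕜 : Type*} [RCLike 𝕜] {l m n : Type*} [Fintype l] [Fintype m] [Fintype n]
  [DecidableEq n]

-- The left-hand side of (iii).
def p2Moment (a₁ a₂ d : Matrix n n 𝕜) (b : Matrix n m 𝕜) (c : Matrix l n 𝕜) : Matrix n n 𝕜 :=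
  d * a₁ * (d * a₁)ᴴ - (d * a₁)ᴴ * (d * a₁) + d * a₂ * (d * a₂)ᴴ - (d * a₂)ᴴ * (d * a₂)
    - a₁ᴴ * a₁ - a₂ᴴ * a₂ + d * b * (d * b)ᴴ - cᴴ * c + 1

theorem re_trace_p2Moment_mul_one_sub_le {a₁ a₂ d P Q : Matrix n n 𝕜} {b : Matrix n m 𝕜}
    (c : Matrix l n 𝕜) (hP : IsStarProjection P) (hQ : IsStarProjection Q)
    (hab : a₁ * a₁ᴴ + a₂ * a₂ᴴ + b * bᴴ = 1) (hb : P * b = b) (hd : Q * (d * P) = d * P)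
    (ha₁ : P * (a₁ * Q) = a₁ * Q) (ha₂ : P * (a₂ * Q) = a₂ * Q) :
    RCLike.re (p2Moment a₁ a₂ d b c * (1 - Q)).trace
      ≤ RCLike.re (1 - Q).trace - RCLike.re (1 - P).trace := by
  have hp := hP.one_sub
  have hq := hQ.one_sub
  set p := 1 - P
  set q := 1 - Q
  have hpb : p * b = 0 := by rw [Matrix.sub_mul, Matrix.one_mul, hb, sub_self]
  have hqdP : q * (d * P) = 0 := by rw [Matrix.sub_mul, Matrix.one_mul, hd, sub_self]
  have hqdb : q * (d * b) = 0 := by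
    rw [← hb, ← Matrix.mul_assoc d, ← Matrix.mul_assoc, hqdP, Matrix.zero_mul]
  have hpa : ∀ a, P * (a * Q) = a * Q → p * a = p * (a * q) := by
    intro a ha
    rw [Matrix.mul_sub, Matrix.mul_one, Matrix.mul_sub, ← ha, ← Matrix.mul_assoc,
      hP.one_sub_mul_self, Matrix.zero_mul, sub_zero]
  have hqda : ∀ a, P * (a * Q) = a * Q → q * (d * a) = q * (d * a * q) := by
    intro a ha
    have hqdaQ : q * (d * (a * Q)) = 0 := by
      rw [← ha, ← Matrix.mul_assoc d, ← Matrix.mul_assoc q, hqdP, Matrix.zero_mul]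
    rw [Matrix.mul_assoc d, Matrix.mul_sub a, Matrix.mul_one, Matrix.mul_sub d, Matrix.mul_sub q,
      hqdaQ, sub_zero]
  have hda_le : ∀ a, P * (a * Q) = a * Q →
      RCLike.re (d * a * (d * a)ᴴ * q).trace ≤ RCLike.re ((d * a)ᴴ * (d * a) * q).trace := by
    intro a ha
    rw [hq.re_trace_mul_conjTranspose_mul, hq.re_trace_conjTranspose_mul_mul, hqda a ha]
    exact hq.frobeniusSq_mul_left_le _
  have ha_le : ∀ a, P * (a * Q) = a * Q →
      frobeniusSq (p * a) ≤ RCLike.re (aᴴ * a * q).trace := by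
    intro a ha
    rw [hq.re_trace_conjTranspose_mul_mul, hpa a ha]
    exact hp.frobeniusSq_mul_left_le _
  have htrace_p : RCLike.re p.trace = frobeniusSq (p * a₁) + frobeniusSq (p * a₂) := by
    rw [show p.trace = ((a₁ * a₁ᴴ + a₂ * a₂ᴴ + b * bᴴ) * p).trace by rw [hab, Matrix.one_mul]]
    simp only [Matrix.add_mul, trace_add, map_add, hp.re_trace_mul_conjTranspose_mul, hpb]
    simp [frobeniusSq]
  have hdb : RCLike.re (d * b * (d * b)ᴴ * q).trace = 0 := by
    rw [hq.re_trace_mul_conjTranspose_mul, hqdb]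
    simp [frobeniusSq]
  unfold p2Moment
  simp only [Matrix.sub_mul, Matrix.add_mul, Matrix.one_mul, trace_sub, trace_add, map_sub,
    map_add]
  linarith [hda_le a₁ ha₁, hda_le a₂ ha₂, ha_le a₁ ha₁, ha_le a₂ ha₂,
    hq.re_trace_conjTranspose_mul_mul c, frobeniusSq_nonneg (c * q)]

end Moment

/-- For a P²-ADHM datum at level `ζ > 0`, the non-degeneracy condition C1'
automatically holds: there are no subspaces `V₀' ⊊ W₀ = ℂᵏ`, `V₁' ⊆ W₁ = ℂᵏ`
with `dim V₀' = dim V₁'`, `range b ⊆ V₀'`, `d(V₀') ⊆ V₁'`, `aᵢ(V₁') ⊆ V₀'`. -/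
theorem stmt3 (k r : ℕ) (ζ : ℝ) (hζ : 0 < ζ)
    (a₁ a₂ d : Matrix (Fin k) (Fin k) ℂ)
    (b : Matrix (Fin k) (Fin r) ℂ) (c : Matrix (Fin r) (Fin k) ℂ)
    (h : IsP2ADHM ζ a₁ a₂ d b c) :
    ¬ ∃ (V₀' V₁' : Submodule ℂ (Fin k → ℂ)),
        V₀' ≠ ⊤ ∧
        Module.finrank ℂ V₀' = Module.finrank ℂ V₁' ∧
        LinearMap.range b.mulVecLin ≤ V₀' ∧
        V₀'.map d.mulVecLin ≤ V₁' ∧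
        V₁'.map a₁.mulVecLin ≤ V₀' ∧
        V₁'.map a₂.mulVecLin ≤ V₀' := by
  rintro ⟨V₀, V₁, hV₀, hdim, hb, hd, ha₁, ha₂⟩
  obtain ⟨-, hab, hmoment⟩ := h
  obtain ⟨P, hP, rfl⟩ := exists_isStarProjection_range_mulVecLin_eq V₀
  obtain ⟨Q, hQ, rfl⟩ := exists_isStarProjection_range_mulVecLin_eq V₁
  have key := re_trace_p2Moment_mul_one_sub_le c hP hQ hab
    (hP.isIdempotentElem.mul_eq_self_of_range_le hb)
    (hQ.isIdempotentElem.mul_eq_self_of_range_le (by rwa [mulVecLin_mul, LinearMap.range_comp]))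
    (hP.isIdempotentElem.mul_eq_self_of_range_le (by rwa [mulVecLin_mul, LinearMap.range_comp]))
    (hP.isIdempotentElem.mul_eq_self_of_range_le (by rwa [mulVecLin_mul, LinearMap.range_comp]))
  have htr : (1 - P).trace = (1 - Q).trace := by
    rw [hP.isIdempotentElem.trace_one_sub, hQ.isIdempotentElem.trace_one_sub, hdim]
  have hpos : 0 < ((1 - Q).trace).re := by
    have hlt := Submodule.finrank_lt hV₀
    rw [Module.finrank_fin_fun, hdim] at hlt
    rw [hQ.isIdempotentElem.trace_one_sub]
    simpa using hlt
  rw [show p2Moment a₁ a₂ d b c = (ζ : ℂ) • 1 from hmoment, smul_mul_assoc, Matrix.one_mul,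
    trace_smul, smul_eq_mul, htr, sub_self, RCLike.re_to_complex, Complex.re_ofReal_mul] at key
  exact (mul_pos hζ hpos).not_ge key
end

section
/- Let k, r ∈ ℕ, ζ ∈ ℝ with ζ < 0, and let (a₁,a₂,d,b,c) be a P²-ADHM datum at level ζ, regarded as linear maps a₁, a₂ : W₁ → W₀, d : W₀ → W₁, b : ℂ^r → W₀, c : W₁ → ℂ^r, where W₀ = W₁ = ℂ^k. Then there exist no subspaces V₀ ⊆ W₀ and V₁ ⊆ W₁ such that V₁ ≠ 0, dim V₀ = dim V₁, V₁ ⊆ ker c, d(V₀) ⊆ V₁, and aᵢ(V₁) ⊆ V₀ for i = 1, 2 (i.e., the non-degeneracy condition C2' automatically holds when ζ < 0). -/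
/-! Let `u` and `v` be isometries (`uᴴ * u = 1`) with ranges `V₁` and `V₀`, and write `‖·‖²` for
the squared Frobenius norm. Applying `M ↦ Re tr (vᴴ M v)` to condition (ii) gives
`‖vᴴ a₁‖² + ‖vᴴ a₂‖² + ‖vᴴ b‖² = dim V₀`, and applying `M ↦ Re tr (uᴴ M u)` to (iii) gives
`∑ᵢ (‖uᴴ d aᵢ‖² - ‖d aᵢ u‖²) - ∑ᵢ ‖aᵢ u‖² + ‖uᴴ d b‖² - ‖c u‖² + dim V₁ = ζ dim V₁`.
Invariance of the subspaces means `d aᵢ u = u uᴴ d aᵢ u`, `aᵢ u = v vᴴ aᵢ u` and `c u = 0`, and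
right multiplication by an isometry does not increase the norm, so `‖d aᵢ u‖² ≤ ‖uᴴ d aᵢ‖²` and
`‖aᵢ u‖² ≤ ‖vᴴ aᵢ‖²`. Hence `ζ dim V₁ ≥ dim V₁ - dim V₀ = 0`, impossible for `ζ < 0`, `V₁ ≠ 0`.
-/

open Matrix

namespace Matrix

variable {m n p : Type*} [Fintype m] [Fintype n] [Fintype p]

def frobSq (Y : Matrix m n ℂ) : ℝ := ∑ i, ∑ j, Complex.normSq (Y i j)

theorem frobSq_nonneg (Y : Matrix m n ℂ) : 0 ≤ frobSq Y :=
  Finset.sum_nonneg fun _ _ => Finset.sum_nonneg fun _ _ => Complex.normSq_nonneg _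

@[simp]
theorem frobSq_zero : frobSq (0 : Matrix m n ℂ) = 0 := by
  simp [frobSq]

theorem re_trace_mul_conjTranspose_self (Y : Matrix m n ℂ) :
    (Y * Yᴴ).trace.re = frobSq Y := by
  simp [trace, mul_apply, frobSq, Complex.mul_conj]

theorem re_trace_conjTranspose_mul_self (Y : Matrix m n ℂ) :
    (Yᴴ * Y).trace.re = frobSq Y := by
  rw [trace_mul_comm, re_trace_mul_conjTranspose_self]

theorem re_trace_conjTranspose_mul_mul_conjTranspose_mul (u : Matrix m n ℂ)
    (X : Matrix m p ℂ) : (uᴴ * (X * Xᴴ) * u).trace.re = frobSq (uᴴ * X) := by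
  rw [← re_trace_mul_conjTranspose_self, conjTranspose_mul, conjTranspose_conjTranspose,
    Matrix.mul_assoc, Matrix.mul_assoc, Matrix.mul_assoc]

theorem re_trace_conjTranspose_mul_conjTranspose_mul_mul (u : Matrix m n ℂ)
    (X : Matrix p m ℂ) : (uᴴ * (Xᴴ * X) * u).trace.re = frobSq (X * u) := by
  rw [← re_trace_conjTranspose_mul_self, conjTranspose_mul, Matrix.mul_assoc, Matrix.mul_assoc,
    Matrix.mul_assoc]

theorem frobSq_isometry_mul [DecidableEq n] {u : Matrix m n ℂ} (hu : uᴴ * u = 1)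
    (M : Matrix n p ℂ) : frobSq (u * M) = frobSq M := by
  rw [← re_trace_conjTranspose_mul_self, conjTranspose_mul, Matrix.mul_assoc,
    ← Matrix.mul_assoc uᴴ, hu, Matrix.one_mul, re_trace_conjTranspose_mul_self]

theorem frobSq_mul_isometry_le [DecidableEq m] [DecidableEq n] {u : Matrix m n ℂ}
    (hu : uᴴ * u = 1) (Y : Matrix p m ℂ) : frobSq (Y * u) ≤ frobSq Y := by
  set P := u * uᴴ
  have hP : (1 - P) * (1 - P)ᴴ = 1 - P := by
    simp only [P, conjTranspose_sub, conjTranspose_one, conjTranspose_mul,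
      conjTranspose_conjTranspose, Matrix.sub_mul, Matrix.mul_sub, Matrix.one_mul,
      Matrix.mul_one, Matrix.mul_assoc]
    rw [← Matrix.mul_assoc uᴴ u, hu, Matrix.one_mul]
    abel
  have hsplit : frobSq Y = frobSq (Y * u) + frobSq (Y * (1 - P)) := by
    rw [← re_trace_mul_conjTranspose_self, ← re_trace_mul_conjTranspose_self (Y * u),
      ← re_trace_mul_conjTranspose_self (Y * (1 - P)), conjTranspose_mul, conjTranspose_mul,
      Matrix.mul_assoc Y (1 - P), ← Matrix.mul_assoc (1 - P), hP]
    simp only [P, Matrix.mul_sub, Matrix.sub_mul, Matrix.one_mul, Matrix.mul_assoc, trace_sub,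
      Complex.sub_re]
    ring
  linarith [frobSq_nonneg (Y * (1 - P))]

theorem exists_isometry_range_eq (V : Submodule ℂ (m → ℂ)) :
    ∃ u : Matrix m (Fin (Module.finrank ℂ V)) ℂ,
      uᴴ * u = 1 ∧ LinearMap.range u.mulVecLin = V := by
  classical
  let e : (m → ℂ) ≃ₗ[ℂ] EuclideanSpace ℂ m := (WithLp.linearEquiv 2 ℂ (m → ℂ)).symm
  have hrank : Module.finrank ℂ (V.map e.toLinearMap) = Module.finrank ℂ V := e.finrank_map_eq V
  let b : OrthonormalBasis (Fin (Module.finrank ℂ V)) ℂ (V.map e.toLinearMap) :=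
    (stdOrthonormalBasis ℂ (V.map e.toLinearMap)).reindex (finCongr hrank)
  refine ⟨of fun i j => (b j : EuclideanSpace ℂ m) i, ?_, ?_⟩
  · ext j j'
    have := b.inner_eq_ite j j'
    rw [Submodule.coe_inner, EuclideanSpace.inner_eq_star_dotProduct] at this
    simpa [mul_apply, one_apply, dotProduct, mul_comm] using this
  · have hcol : (of fun i j => (b j : EuclideanSpace ℂ m) i).col =
        e.symm.toLinearMap ∘ (V.map e.toLinearMap).subtype ∘ b := rfl
    rw [range_mulVecLin, hcol, Set.range_comp, Set.range_comp, Submodule.span_image,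
      Submodule.span_image, ← b.coe_toBasis, b.toBasis.span_eq, Submodule.map_top,
      Submodule.range_subtype]
    exact (Submodule.map_symm_eq_iff e).mpr rfl

theorem isometry_mul_conjTranspose_mul_of_range_le [DecidableEq n] {u : Matrix m n ℂ}
    (hu : uᴴ * u = 1) {M : Matrix m p ℂ}
    (h : LinearMap.range M.mulVecLin ≤ LinearMap.range u.mulVecLin) :
    u * (uᴴ * M) = M := by
  have hcol (j : p) : ∃ α, u *ᵥ α = M.col j := by
    classical
    simpa using h ⟨Pi.single j 1, by simp⟩
  choose α hα using hcol
  obtain rfl : M = u * (of α)ᵀ := by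
    ext i j
    simpa [mul_apply, mulVec, dotProduct] using (congrFun (hα j) i).symm
  rw [← Matrix.mul_assoc uᴴ, hu, Matrix.one_mul]

theorem mul_eq_zero_of_range_le_ker {l : Type*} {c : Matrix l m ℂ} {u : Matrix m n ℂ}
    (h : LinearMap.range u.mulVecLin ≤ LinearMap.ker c.mulVecLin) : c * u = 0 := by
  classical
  rw [LinearMap.range_le_ker_iff, ← mulVecLin_mul] at h
  exact toLin'.injective (by rw [toLin'_apply', h, map_zero])

theorem frobSq_mul_le_of_map_le [DecidableEq m] [DecidableEq n] [DecidableEq p]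
    {u : Matrix m n ℂ} {v : Matrix m p ℂ} (hu : uᴴ * u = 1) (hv : vᴴ * v = 1)
    {Y : Matrix m m ℂ}
    (h : (LinearMap.range u.mulVecLin).map Y.mulVecLin ≤ LinearMap.range v.mulVecLin) :
    frobSq (Y * u) ≤ frobSq (vᴴ * Y) := by
  have hYu : v * (vᴴ * (Y * u)) = Y * u := by
    refine isometry_mul_conjTranspose_mul_of_range_le hv ?_
    rwa [mulVecLin_mul, LinearMap.range_comp]
  calc frobSq (Y * u) = frobSq (vᴴ * Y * u) := by
        rw [← hYu, frobSq_isometry_mul hv, Matrix.mul_assoc]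
    _ ≤ frobSq (vᴴ * Y) := frobSq_mul_isometry_le hu _

end Matrix

namespace IsP2ADHM

variable {k r n : ℕ} {ζ : ℝ} {a₁ a₂ d : Matrix (Fin k) (Fin k) ℂ}
  {b : Matrix (Fin k) (Fin r) ℂ} {c : Matrix (Fin r) (Fin k) ℂ}

theorem frobSq_compress_moment (h : IsP2ADHM ζ a₁ a₂ d b c) {v : Matrix (Fin k) (Fin n) ℂ}
    (hv : vᴴ * v = 1) :
    frobSq (vᴴ * a₁) + frobSq (vᴴ * a₂) + frobSq (vᴴ * b) = n := by
  have := congrArg (fun M => (vᴴ * M * v).trace.re) h.2.1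
  simpa only [Matrix.mul_add, Matrix.add_mul, trace_add, Complex.add_re,
    re_trace_conjTranspose_mul_mul_conjTranspose_mul, Matrix.mul_one, hv, trace_one,
    Fintype.card_fin, Complex.natCast_re] using this

theorem frobSq_compress_level (h : IsP2ADHM ζ a₁ a₂ d b c) {u : Matrix (Fin k) (Fin n) ℂ}
    (hu : uᴴ * u = 1) :
    frobSq (uᴴ * (d * a₁)) - frobSq (d * a₁ * u) + frobSq (uᴴ * (d * a₂)) - frobSq (d * a₂ * u)
      - frobSq (a₁ * u) - frobSq (a₂ * u) + frobSq (uᴴ * (d * b)) - frobSq (c * u) + n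
      = ζ * n := by
  have := congrArg (fun M => (uᴴ * M * u).trace.re) h.2.2
  simpa only [Matrix.mul_add, Matrix.add_mul, Matrix.mul_sub, Matrix.sub_mul, trace_add,
    trace_sub, Complex.add_re, Complex.sub_re, re_trace_conjTranspose_mul_mul_conjTranspose_mul,
    re_trace_conjTranspose_mul_conjTranspose_mul_mul, Matrix.mul_one, Matrix.mul_smul,
    Matrix.smul_mul, hu, trace_smul, trace_one, Fintype.card_fin, smul_eq_mul,
    Complex.re_ofReal_mul, Complex.natCast_re] using this

end IsP2ADHM

/-- For a P²-ADHM datum at level `ζ < 0`, the non-degeneracy condition C2'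
automatically holds: there are no subspaces `V₀ ⊆ W₀ = ℂᵏ` and `0 ≠ V₁ ⊆ W₁ = ℂᵏ`
with `dim V₀ = dim V₁`, `V₁ ⊆ ker c`, `d(V₀) ⊆ V₁`, `aᵢ(V₁) ⊆ V₀`. -/
theorem stmt4 (k r : ℕ) (ζ : ℝ) (hζ : ζ < 0)
    (a₁ a₂ d : Matrix (Fin k) (Fin k) ℂ)
    (b : Matrix (Fin k) (Fin r) ℂ) (c : Matrix (Fin r) (Fin k) ℂ)
    (h : IsP2ADHM ζ a₁ a₂ d b c) :
    ¬ ∃ (V₀ V₁ : Submodule ℂ (Fin k → ℂ)),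
        V₁ ≠ ⊥ ∧
        Module.finrank ℂ V₀ = Module.finrank ℂ V₁ ∧
        V₁ ≤ LinearMap.ker c.mulVecLin ∧
        V₀.map d.mulVecLin ≤ V₁ ∧
        V₁.map a₁.mulVecLin ≤ V₀ ∧
        V₁.map a₂.mulVecLin ≤ V₀ := by
  rintro ⟨V₀, V₁, hne, hrank, hker, hd, ha₁, ha₂⟩
  obtain ⟨u, hu, hV₁⟩ := exists_isometry_range_eq V₁
  obtain ⟨v, hv, hV₀⟩ := exists_isometry_range_eq V₀
  have hda (a : Matrix (Fin k) (Fin k) ℂ) (ha : V₁.map a.mulVecLin ≤ V₀) :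
      frobSq (d * a * u) ≤ frobSq (uᴴ * (d * a)) := by
    refine frobSq_mul_le_of_map_le hu hu ?_
    rw [hV₁, mulVecLin_mul, Submodule.map_comp]
    exact (Submodule.map_mono ha).trans hd
  have ha (a : Matrix (Fin k) (Fin k) ℂ) (ha : V₁.map a.mulVecLin ≤ V₀) :
      frobSq (a * u) ≤ frobSq (vᴴ * a) :=
    frobSq_mul_le_of_map_le hu hv (by rwa [hV₁, hV₀])
  have hcu : c * u = 0 := mul_eq_zero_of_range_le_ker (by rwa [hV₁])
  have hpos : (0 : ℝ) < Module.finrank ℂ V₁ := by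
    have := Submodule.nontrivial_iff_ne_bot.mpr hne
    exact_mod_cast Module.finrank_pos
  have hrank' : (Module.finrank ℂ V₀ : ℝ) = Module.finrank ℂ V₁ := by exact_mod_cast hrank
  have hmoment := h.frobSq_compress_moment hv
  have hlevel := h.frobSq_compress_level hu
  rw [hcu, frobSq_zero] at hlevel
  linarith [mul_neg_of_neg_of_pos hζ hpos, hda a₁ ha₁, hda a₂ ha₂, ha a₁ ha₁, ha a₂ ha₂,
    frobSq_nonneg (vᴴ * b), frobSq_nonneg (uᴴ * (d * b))]
end

section
/- Let W₀ and W₁ be finite-dimensional complex vector spaces, and let x : W₀ → W₁ and a₁, a₂ : W₁ → W₀ be linear maps such that a₁∘x∘a₂ = a₂∘x∘a₁ and ker(a₁∘x) ∩ ker(a₂∘x) ⊆ ker x. If v₁ ∈ ker(x∘a₁) and v₂ ∈ ker(x∘a₂) satisfy x(a₂(v₁)) = x(a₁(v₂)), then x(a₂(v₁)) = x(a₁(v₂)) = 0. -/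
namespace LinearMap

variable {R M N : Type*} [Semiring R] [AddCommMonoid M] [Module R M] [AddCommMonoid N] [Module R N]

theorem apply_apply_eq_zero_of_comp_comm {x : M →ₗ[R] N} {a₁ a₂ : N →ₗ[R] M}
    (hcomm : a₁ ∘ₗ x ∘ₗ a₂ = a₂ ∘ₗ x ∘ₗ a₁) {v : N} (hv : x (a₁ v) = 0) :
    a₁ (x (a₂ v)) = 0 := by
  have h := DFunLike.congr_fun hcomm v
  simp only [comp_apply] at h
  rw [h, hv, map_zero]

end LinearMap

theorem stmt8_general {W₀ W₁ : Type*}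
    [AddCommGroup W₀] [Module ℂ W₀]
    [AddCommGroup W₁] [Module ℂ W₁]
    (x : W₀ →ₗ[ℂ] W₁) (a₁ a₂ : W₁ →ₗ[ℂ] W₀)
    (hcomm : a₁ ∘ₗ x ∘ₗ a₂ = a₂ ∘ₗ x ∘ₗ a₁)
    (hker : LinearMap.ker (a₁ ∘ₗ x) ⊓ LinearMap.ker (a₂ ∘ₗ x) ≤ LinearMap.ker x)
    (v₁ v₂ : W₁)
    (h₁ : v₁ ∈ LinearMap.ker (x ∘ₗ a₁))
    (h₂ : v₂ ∈ LinearMap.ker (x ∘ₗ a₂))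
    (he : x (a₂ v₁) = x (a₁ v₂)) :
    x (a₂ v₁) = 0 ∧ x (a₁ v₂) = 0 := by
  have hmem : a₂ v₁ ∈ LinearMap.ker (a₁ ∘ₗ x) ⊓ LinearMap.ker (a₂ ∘ₗ x) := by
    refine ⟨LinearMap.apply_apply_eq_zero_of_comp_comm hcomm h₁, ?_⟩
    change a₂ (x (a₂ v₁)) = 0
    rw [he]
    exact LinearMap.apply_apply_eq_zero_of_comp_comm hcomm.symm h₂
  have hzero : x (a₂ v₁) = 0 := hker hmem
  exact ⟨hzero, he ▸ hzero⟩

/-- Let `x : W₀ → W₁` and `a₁, a₂ : W₁ → W₀` be linear maps between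
finite-dimensional complex vector spaces with `a₁∘x∘a₂ = a₂∘x∘a₁` and
`ker(a₁∘x) ∩ ker(a₂∘x) ⊆ ker x`. If `v₁ ∈ ker(x∘a₁)`, `v₂ ∈ ker(x∘a₂)` and
`x(a₂ v₁) = x(a₁ v₂)`, then `x(a₂ v₁) = x(a₁ v₂) = 0`. -/
theorem stmt8 {W₀ W₁ : Type*}
    [AddCommGroup W₀] [Module ℂ W₀] [FiniteDimensional ℂ W₀]
    [AddCommGroup W₁] [Module ℂ W₁] [FiniteDimensional ℂ W₁]
    (x : W₀ →ₗ[ℂ] W₁) (a₁ a₂ : W₁ →ₗ[ℂ] W₀)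
    (hcomm : a₁ ∘ₗ x ∘ₗ a₂ = a₂ ∘ₗ x ∘ₗ a₁)
    (hker : LinearMap.ker (a₁ ∘ₗ x) ⊓ LinearMap.ker (a₂ ∘ₗ x) ≤ LinearMap.ker x)
    (v₁ v₂ : W₁)
    (h₁ : v₁ ∈ LinearMap.ker (x ∘ₗ a₁))
    (h₂ : v₂ ∈ LinearMap.ker (x ∘ₗ a₂))
    (he : x (a₂ v₁) = x (a₁ v₂)) :
    x (a₂ v₁) = 0 ∧ x (a₁ v₂) = 0 :=
  stmt8_general x a₁ a₂ hcomm hker v₁ v₂ h₁ h₂ he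
end

section
/- Let W₀ and W₁ be finite-dimensional complex vector spaces, and let x : W₀ → W₁ and a₁, a₂ : W₁ → W₀ be linear maps such that a₁∘x∘a₂ = a₂∘x∘a₁, ker(a₁∘x) ∩ ker(a₂∘x) ⊆ ker x, and both x∘a₁ and x∘a₂ are nilpotent endomorphisms of W₁. If neither ker(x∘a₁) ⊆ ker(x∘a₂) nor ker(x∘a₂) ⊆ ker(x∘a₁), then dim(ker(x∘a₁) ∩ ker(x∘a₂)) ≥ 2. -/
private lemma stmt9_aux {W : Type*} [AddCommGroup W] [Module ℂ W]
    (A B : W →ₗ[ℂ] W) (hc : ∀ y, A (B y) = B (A y)) (hn : IsNilpotent B)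
    (u : W) (hu : A u = 0) (hu' : B u ≠ 0) :
    ∃ q, A q = 0 ∧ A (B q) = 0 ∧ B (B q) = 0 ∧ B q ≠ 0 := by
  classical
  obtain ⟨n, hBn⟩ := hn
  have hpow : ∀ j, A ((B ^ j) u) = 0 := by
    intro j
    induction j with
    | zero => simpa using hu
    | succ j ih =>
      have h1 : (B ^ (j + 1)) u = B ((B ^ j) u) := by
        rw [pow_succ']; rfl
      rw [h1, hc, ih, map_zero]
  have hstep : ∀ j, B ((B ^ j) u) = (B ^ (j + 1)) u := by
    intro j
    rw [pow_succ', Module.End.mul_apply]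
  have hex : ∃ m, (B ^ m) u = 0 := ⟨n, by rw [hBn]; rfl⟩
  have hspec : (B ^ Nat.find hex) u = 0 := Nat.find_spec hex
  have hk0 : Nat.find hex ≠ 0 := by
    intro h
    rw [h] at hspec
    simp only [pow_zero, Module.End.one_apply] at hspec
    exact hu' (by rw [hspec, map_zero])
  have hk1 : Nat.find hex ≠ 1 := by
    intro h
    rw [h] at hspec
    simp only [pow_one] at hspec
    exact hu' hspec
  obtain ⟨m, hm⟩ : ∃ m, Nat.find hex = m + 2 := ⟨Nat.find hex - 2, by omega⟩
  rw [hm] at hspec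
  refine ⟨(B ^ m) u, hpow m, ?_, ?_, ?_⟩
  · rw [hstep m]; exact hpow (m + 1)
  · rw [hstep m]; exact (hstep (m + 1)).trans hspec
  · rw [hstep m]; exact Nat.find_min hex (by omega)

/-- Let `x : W₀ → W₁` and `a₁, a₂ : W₁ → W₀` be linear maps between
finite-dimensional complex vector spaces with `a₁∘x∘a₂ = a₂∘x∘a₁`,
`ker(a₁∘x) ∩ ker(a₂∘x) ⊆ ker x`, and `x∘a₁`, `x∘a₂` nilpotent. If neither
`ker(x∘a₁) ⊆ ker(x∘a₂)` nor `ker(x∘a₂) ⊆ ker(x∘a₁)`, then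
`dim (ker(x∘a₁) ∩ ker(x∘a₂)) ≥ 2`. -/
theorem stmt9 {W₀ W₁ : Type*}
    [AddCommGroup W₀] [Module ℂ W₀] [FiniteDimensional ℂ W₀]
    [AddCommGroup W₁] [Module ℂ W₁] [FiniteDimensional ℂ W₁]
    (x : W₀ →ₗ[ℂ] W₁) (a₁ a₂ : W₁ →ₗ[ℂ] W₀)
    (hcomm : a₁ ∘ₗ x ∘ₗ a₂ = a₂ ∘ₗ x ∘ₗ a₁)
    (hker : LinearMap.ker (a₁ ∘ₗ x) ⊓ LinearMap.ker (a₂ ∘ₗ x) ≤ LinearMap.ker x)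
    (hn₁ : IsNilpotent (x ∘ₗ a₁))
    (hn₂ : IsNilpotent (x ∘ₗ a₂))
    (hns₁ : ¬ LinearMap.ker (x ∘ₗ a₁) ≤ LinearMap.ker (x ∘ₗ a₂))
    (hns₂ : ¬ LinearMap.ker (x ∘ₗ a₂) ≤ LinearMap.ker (x ∘ₗ a₁)) :
    2 ≤ Module.finrank ℂ ↥(LinearMap.ker (x ∘ₗ a₁) ⊓ LinearMap.ker (x ∘ₗ a₂)) := by
  set A := x ∘ₗ a₁ with hA
  set B := x ∘ₗ a₂ with hB
  -- pointwise form of hcomm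
  have hcomm' : ∀ y : W₁, a₁ (x (a₂ y)) = a₂ (x (a₁ y)) := fun y =>
    LinearMap.congr_fun hcomm y
  have hc : ∀ y : W₁, A (B y) = B (A y) := by
    intro y
    simp only [hA, hB, LinearMap.comp_apply]
    rw [hcomm']
  have hc' : ∀ y : W₁, B (A y) = A (B y) := fun y => (hc y).symm
  -- extract elements
  rw [SetLike.le_def] at hns₁ hns₂
  push_neg at hns₁ hns₂
  obtain ⟨u, hu, hu'⟩ := hns₁
  obtain ⟨w, hw, hw'⟩ := hns₂
  rw [LinearMap.mem_ker] at hu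
  rw [LinearMap.mem_ker] at hu'
  rw [LinearMap.mem_ker] at hw
  rw [LinearMap.mem_ker] at hw'
  obtain ⟨q₁, hq₁A, hp₁A, hp₁B, hp₁ne⟩ := stmt9_aux A B hc hn₂ u hu hu'
  obtain ⟨q₂, hq₂B, hp₂B, hp₂A, hp₂ne⟩ := stmt9_aux B A hc' hn₁ w hw hw'
  set p₁ := B q₁ with hp₁
  set p₂ := A q₂ with hp₂
  -- a₁ p₁ = 0
  have ha₁p₁ : a₁ p₁ = 0 := by
    have : a₁ (x (a₂ q₁)) = a₂ (x (a₁ q₁)) := hcomm' q₁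
    have h2 : x (a₁ q₁) = 0 := hq₁A
    rw [h2, map_zero] at this
    simpa [hp₁, hB, LinearMap.comp_apply] using this
  -- a₂ p₂ = 0
  have ha₂p₂ : a₂ p₂ = 0 := by
    have : a₂ (x (a₁ q₂)) = a₁ (x (a₂ q₂)) := (hcomm' q₂).symm
    have h2 : x (a₂ q₂) = 0 := hq₂B
    rw [h2, map_zero] at this
    simpa [hp₂, hA, LinearMap.comp_apply] using this
  by_contra hlt
  push_neg at hlt
  have hle1 : Module.finrank ℂ ↥(LinearMap.ker A ⊓ LinearMap.ker B) ≤ 1 := by omega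
  -- p₁ and p₂ are in the kernel intersection
  have hp₁mem : p₁ ∈ LinearMap.ker A ⊓ LinearMap.ker B := by
    refine Submodule.mem_inf.mpr ⟨?_, ?_⟩ <;> rw [LinearMap.mem_ker]
    · exact hp₁A
    · exact hp₁B
  have hp₂mem : p₂ ∈ LinearMap.ker A ⊓ LinearMap.ker B := by
    refine Submodule.mem_inf.mpr ⟨?_, ?_⟩ <;> rw [LinearMap.mem_ker]
    · exact hp₂A
    · exact hp₂B
  -- the span of p₁ equals the kernel intersection
  have hspan_le : Submodule.span ℂ {p₁} ≤ LinearMap.ker A ⊓ LinearMap.ker B :=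
    Submodule.span_le.mpr (by simpa using hp₁mem)
  have hspanfr : Module.finrank ℂ ↥(Submodule.span ℂ {p₁}) = 1 :=
    finrank_span_singleton hp₁ne
  have heq : Submodule.span ℂ {p₁} = LinearMap.ker A ⊓ LinearMap.ker B :=
    Submodule.eq_of_le_of_finrank_le hspan_le (by rw [hspanfr]; exact hle1)
  have hp₂span : p₂ ∈ Submodule.span ℂ {p₁} := heq ▸ hp₂mem
  obtain ⟨c, hcp⟩ := Submodule.mem_span_singleton.mp hp₂span
  have hcne : c ≠ 0 := by
    rintro rfl
    rw [zero_smul] at hcp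
    exact hp₂ne hcp.symm
  have ha₂p₁ : a₂ p₁ = 0 := by
    have : c • a₂ p₁ = 0 := by rw [← map_smul, hcp, ha₂p₂]
    rcases smul_eq_zero.mp this with h | h
    · exact absurd h hcne
    · exact h
  -- p₁ = x (a₂ q₁), apply hker
  have hz : a₂ q₁ ∈ LinearMap.ker (a₁ ∘ₗ x) ⊓ LinearMap.ker (a₂ ∘ₗ x) := by
    refine Submodule.mem_inf.mpr ⟨?_, ?_⟩ <;> rw [LinearMap.mem_ker, LinearMap.comp_apply]
    · exact ha₁p₁
    · exact ha₂p₁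
  have hxz : x (a₂ q₁) = 0 := hker hz
  exact hp₁ne hxz
end

section
/- Let W₀ and W₁ be complex vector spaces with dim W₀ = dim W₁ = k ≤ 4, and let x : W₀ → W₁ and a₁, a₂ : W₁ → W₀ be linear maps such that a₁∘x∘a₂ = a₂∘x∘a₁, ker(a₁∘x) ∩ ker(a₂∘x) ⊆ ker x, and both x∘a₁ and x∘a₂ are nilpotent endomorphisms of W₁. Then dim(ker x) ≤ dim(ker(x∘a₁) ∩ ker(x∘a₂)). -/
/-!
Put `f = x ∘ a₁`, `g = x ∘ a₂` (commuting nilpotent endomorphisms of `W₁`), `N = im f + im g`,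
which lies in `im x`, and `C = ker f ∩ ker g`; it suffices to show `dim W₁ ≤ dim N + dim C`.
The map `w ↦ (f w, g w)` has kernel `C` and lands in `S = {(u, v) ∈ N × N | g u = f v}`, so
`dim W₁ - dim C ≤ dim S ≤ 2 dim N`. If `N ≠ 0`, the commuting nilpotents `f, g` have a common
null vector `n ≠ 0` in `N`; both `(n, 0)` and `(0, n)` lie in `S`, but they cannot both be of the
form `(f w, g w)`: the commutation relation would give `a₁ n = a₂ n = 0`, contradicting
`ker (a₁ x) ∩ ker (a₂ x) ⊆ ker x`. Hence `dim W₁ - dim C < dim S`. Finally either `S = N × N`,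
which forces `N ⊆ C`, or `dim S < 2 dim N`. For `dim W₁ ≤ 4` these bounds suffice whatever
`dim N` is.
-/

open Module LinearMap

namespace Module.End

variable {K W : Type*} [Field K] [AddCommGroup W] [Module K W] {f g : End K W}

variable (f g) in
def pairMap : W →ₗ[K] ↥(range f ⊔ range g) × ↥(range f ⊔ range g) :=
  (f.codRestrict _ fun w => Submodule.mem_sup_left (mem_range_self f w)).prod
    (g.codRestrict _ fun w => Submodule.mem_sup_right (mem_range_self g w))

variable (f g) in
def crossSub : ↥(range f ⊔ range g) × ↥(range f ⊔ range g) →ₗ[K] W :=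
  (g ∘ₗ Submodule.subtype _).coprod (-(f ∘ₗ Submodule.subtype _))

theorem range_pairMap_le_ker_crossSub (hfg : Commute f g) :
    range (pairMap f g) ≤ ker (crossSub f g) := by
  rintro _ ⟨w, rfl⟩
  simp [pairMap, crossSub, ← mul_apply, hfg.eq]

theorem range_pairMap_lt_ker_crossSub (hfg : Commute f g)
    (hsep : ∀ w w', f w = 0 → g w' = 0 → g w = f w' → g w = 0)
    (hN : (range f ⊔ range g) ⊓ (ker f ⊓ ker g) ≠ ⊥) :
    range (pairMap f g) < ker (crossSub f g) := by
  obtain ⟨n, ⟨hnN, hfn : f n = 0, hgn : g n = 0⟩, hn0⟩ := Submodule.ne_bot_iff _ |>.1 hN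
  refine lt_of_le_of_ne (range_pairMap_le_ker_crossSub hfg) fun h => hn0 ?_
  obtain ⟨w, hw⟩ : (⟨n, hnN⟩, 0) ∈ range (pairMap f g) := h ▸ by simp [crossSub, hgn]
  obtain ⟨w', hw'⟩ : (0, ⟨n, hnN⟩) ∈ range (pairMap f g) := h ▸ by simp [crossSub, hfn]
  have hfw : f w = n := congrArg (fun p => (p.1 : W)) hw
  have hgw : g w = 0 := congrArg (fun p => (p.2 : W)) hw
  have hfw' : f w' = 0 := congrArg (fun p => (p.1 : W)) hw'
  have hgw' : g w' = n := congrArg (fun p => (p.2 : W)) hw'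
  exact hgw'.symm.trans (hsep w' w hfw' hgw (hgw'.trans hfw.symm))

variable [FiniteDimensional K W]

theorem ker_ne_bot_of_isNilpotent [Nontrivial W] (hf : IsNilpotent f) : ker f ≠ ⊥ :=
  fun h => hf.not_isUnit ((LinearMap.isUnit_iff_ker_eq_bot f).2 h)

theorem ker_inf_ker_ne_bot_of_commute [Nontrivial W] (hf : IsNilpotent f) (hg : IsNilpotent g)
    (hfg : Commute f g) : ker f ⊓ ker g ≠ ⊥ := by
  have hmaps : Set.MapsTo g (ker f) (ker f) := fun v (hv : f v = 0) => by
    change f (g v) = 0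
    rw [← mul_apply, hfg.eq, mul_apply, hv, map_zero]
  have : Nontrivial (ker f) := Submodule.nontrivial_iff_ne_bot.2 (ker_ne_bot_of_isNilpotent hf)
  obtain ⟨v, hv, hv0⟩ := Submodule.ne_bot_iff _ |>.1
    (ker_ne_bot_of_isNilpotent (isNilpotent.restrict hmaps hg))
  exact Submodule.ne_bot_iff _ |>.2 ⟨v, ⟨v.2, congrArg Subtype.val hv⟩, by simpa using hv0⟩

theorem sup_range_inf_ker_inf_ker_ne_bot (hf : IsNilpotent f) (hg : IsNilpotent g)
    (hfg : Commute f g) (hN : range f ⊔ range g ≠ ⊥) :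
    (range f ⊔ range g) ⊓ (ker f ⊓ ker g) ≠ ⊥ := by
  have : Nontrivial ↥(range f ⊔ range g) := Submodule.nontrivial_iff_ne_bot.2 hN
  obtain ⟨n, ⟨hfn, hgn⟩, hn0⟩ := Submodule.ne_bot_iff _ |>.1 (ker_inf_ker_ne_bot_of_commute
    (isNilpotent.restrict (fun w _ => Submodule.mem_sup_left (mem_range_self f w)) hf)
    (isNilpotent.restrict (fun w _ => Submodule.mem_sup_right (mem_range_self g w)) hg)
    (restrict_commute hfg _ _))
  exact Submodule.ne_bot_iff _ |>.2
    ⟨n, ⟨n.2, congrArg Subtype.val hfn, congrArg Subtype.val hgn⟩, by simpa using hn0⟩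

variable (f g) in
theorem finrank_range_pairMap_add_finrank_ker_inf_ker :
    finrank K (range (pairMap f g)) + finrank K ↥(ker f ⊓ ker g) = finrank K W := by
  rw [← (pairMap f g).finrank_range_add_finrank_ker, pairMap, ker_prod, ker_codRestrict,
    ker_codRestrict]

theorem finrank_ker_crossSub_le :
    finrank K (ker (crossSub f g)) ≤ 2 * finrank K ↥(range f ⊔ range g) :=
  (Submodule.finrank_le _).trans (by rw [finrank_prod]; omega)

theorem sup_range_le_ker_inf_ker_or_finrank_ker_crossSub_lt :
    range f ⊔ range g ≤ ker f ⊓ ker g ∨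
      finrank K (ker (crossSub f g)) < 2 * finrank K ↥(range f ⊔ range g) := by
  by_cases htop : ker (crossSub f g) = ⊤
  · refine Or.inl fun u hu => ⟨?_, ?_⟩
    · have h : ((0 : ↥(range f ⊔ range g)), ⟨u, hu⟩) ∈ ker (crossSub f g) :=
        htop ▸ Submodule.mem_top
      simpa [crossSub] using h
    · have h : ((⟨u, hu⟩ : ↥(range f ⊔ range g)), 0) ∈ ker (crossSub f g) :=
        htop ▸ Submodule.mem_top
      simpa [crossSub] using h
  · have := Submodule.finrank_lt htop
    rw [finrank_prod] at this
    exact Or.inr (by omega)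

theorem finrank_le_finrank_sup_range_add_finrank_ker_inf_ker (hW : finrank K W ≤ 4)
    (hf : IsNilpotent f) (hg : IsNilpotent g) (hfg : Commute f g)
    (hsep : ∀ w w', f w = 0 → g w' = 0 → g w = f w' → g w = 0) :
    finrank K W ≤ finrank K ↥(range f ⊔ range g) + finrank K ↥(ker f ⊓ ker g) := by
  have hrank := finrank_range_pairMap_add_finrank_ker_inf_ker f g
  have hle := Submodule.finrank_mono (range_pairMap_le_ker_crossSub hfg)
  have hS := finrank_ker_crossSub_le (f := f) (g := g)
  rcases eq_or_ne (range f ⊔ range g) ⊥ with hN | hN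
  · have := Submodule.finrank_eq_zero.2 hN
    omega
  have hcommon := sup_range_inf_ker_inf_ker_ne_bot hf hg hfg hN
  have hC : 1 ≤ finrank K ↥(ker f ⊓ ker g) :=
    Submodule.one_le_finrank_iff.2 (ne_bot_of_le_ne_bot hcommon inf_le_right)
  have hlt := Submodule.finrank_lt_finrank_of_lt (range_pairMap_lt_ker_crossSub hfg hsep hcommon)
  rcases sup_range_le_ker_inf_ker_or_finrank_ker_crossSub_lt (f := f) (g := g) with hNC | hSlt
  · have := Submodule.finrank_mono hNC
    omega
  · omega

end Module.End

theorem LinearMap.apply_eq_zero_of_comp_comm {R M₀ M₁ : Type*} [Semiring R]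
    [AddCommMonoid M₀] [Module R M₀] [AddCommMonoid M₁] [Module R M₁]
    {x : M₀ →ₗ[R] M₁} {a₁ a₂ : M₁ →ₗ[R] M₀}
    (hcomm : a₁ ∘ₗ x ∘ₗ a₂ = a₂ ∘ₗ x ∘ₗ a₁) (hker : ker (a₁ ∘ₗ x) ⊓ ker (a₂ ∘ₗ x) ≤ ker x)
    {w w' : M₁} (hw : x (a₁ w) = 0) (hw' : x (a₂ w') = 0) (h : x (a₂ w) = x (a₁ w')) :
    x (a₂ w) = 0 := by
  have hc : ∀ v, a₁ (x (a₂ v)) = a₂ (x (a₁ v)) := LinearMap.congr_fun hcomm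
  have h₁ : a₁ (x (a₂ w)) = 0 := by rw [hc, hw, map_zero]
  have h₂ : a₂ (x (a₂ w)) = 0 := by rw [h, ← hc, hw', map_zero]
  exact hker ⟨h₁, h₂⟩

/-- Let `W₀, W₁` be complex vector spaces with `dim W₀ = dim W₁ = k ≤ 4`, and
`x : W₀ → W₁`, `a₁, a₂ : W₁ → W₀` linear maps with `a₁∘x∘a₂ = a₂∘x∘a₁`,
`ker(a₁∘x) ∩ ker(a₂∘x) ⊆ ker x`, and `x∘a₁`, `x∘a₂` nilpotent. Then
`dim (ker x) ≤ dim (ker(x∘a₁) ∩ ker(x∘a₂))`. -/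
theorem stmt10 {W₀ W₁ : Type*} (k : ℕ) (hk : k ≤ 4)
    [AddCommGroup W₀] [Module ℂ W₀] [FiniteDimensional ℂ W₀]
    [AddCommGroup W₁] [Module ℂ W₁] [FiniteDimensional ℂ W₁]
    (hdim₀ : Module.finrank ℂ W₀ = k) (hdim₁ : Module.finrank ℂ W₁ = k)
    (x : W₀ →ₗ[ℂ] W₁) (a₁ a₂ : W₁ →ₗ[ℂ] W₀)
    (hcomm : a₁ ∘ₗ x ∘ₗ a₂ = a₂ ∘ₗ x ∘ₗ a₁)
    (hker : LinearMap.ker (a₁ ∘ₗ x) ⊓ LinearMap.ker (a₂ ∘ₗ x) ≤ LinearMap.ker x)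
    (hn₁ : IsNilpotent (x ∘ₗ a₁))
    (hn₂ : IsNilpotent (x ∘ₗ a₂)) :
    Module.finrank ℂ ↥(LinearMap.ker x)
      ≤ Module.finrank ℂ ↥(LinearMap.ker (x ∘ₗ a₁) ⊓ LinearMap.ker (x ∘ₗ a₂)) := by
  have hfg : Commute (x ∘ₗ a₁) (x ∘ₗ a₂) :=
    LinearMap.ext fun w => congrArg x (LinearMap.congr_fun hcomm w)
  have hmain := Module.End.finrank_le_finrank_sup_range_add_finrank_ker_inf_ker (hdim₁ ▸ hk)
    hn₁ hn₂ hfg fun _ _ hw hw' h => apply_eq_zero_of_comp_comm hcomm hker hw hw' h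
  have hrange := Submodule.finrank_mono
    (sup_le (range_comp_le_range a₁ x) (range_comp_le_range a₂ x))
  have := x.finrank_range_add_finrank_ker
  omega
end

section
/- Let W₀ and W₁ be complex vector spaces with dim W₀ = dim W₁ = k ≤ 4, and let x : W₀ → W₁ and a₁, a₂ : W₁ → W₀ be linear maps such that a₁∘x∘a₂ = a₂∘x∘a₁, range x ⊆ range(x∘a₁) + range(x∘a₂), and both a₁∘x and a₂∘x are nilpotent endomorphisms of W₀. Then dim(range(a₁∘x) + range(a₂∘x)) ≤ dim(range x). -/
/-!
Write `g`, `r`, `ρ` for the dimensions of `range (a₁x) + range (a₂x)`, of `range x` and of the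
range of the joint map `(xa₁, xa₂) : W₁ → W₁ × W₁`. The map `n ↦ (xa₁ n, xa₂ n)` into
`range x × range x` lands, because `a₁xa₂ = a₂xa₁`, in the kernel of `(u, w) ↦ a₂u - a₁w`, whose
image is `range (a₁x) + range (a₂x)`; hence `g + ρ ≤ 2r`, while the range hypothesis gives
`r ≤ 2ρ`. As `a₁x` and `a₂x` are commuting nilpotents, a Nakayama argument gives `g < k`.
For `k ≤ 4` this leaves only `r = 2`, `ρ = 1`. There `xa₁`, `xa₂` are nilpotent of joint rank
one, so they kill each other's ranges and hence `range x`; thus `x a_i x = 0` and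
`g ≤ dim ker x = k - r = r`.
-/

open LinearMap Module

theorem LinearMap.isNilpotent_comp_comm {R M N : Type*} [Semiring R] [AddCommMonoid M]
    [Module R M] [AddCommMonoid N] [Module R N] {f : M →ₗ[R] N} {g : N →ₗ[R] M}
    (h : IsNilpotent (g ∘ₗ f)) : IsNilpotent (f ∘ₗ g) := by
  obtain ⟨m, hm⟩ := h
  have hpow : ∀ j : ℕ, (f ∘ₗ g) ^ (j + 1) = f ∘ₗ ((g ∘ₗ f) ^ j) ∘ₗ g := by
    intro j
    induction j with
    | zero => rfl
    | succ j ih => rw [pow_succ, ih, pow_succ]; rfl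
  exact ⟨m + 1, by rw [hpow, hm, zero_comp, comp_zero]⟩

namespace Module.End

variable {R M : Type*} [Semiring R] [AddCommMonoid M] [Module R M]

theorem range_pow_sup_range_eq_top {f g : End R M} (hfg : Commute f g)
    (h : range f ⊔ range g = ⊤) (j : ℕ) : range (f ^ j) ⊔ range g = ⊤ := by
  induction j with
  | zero => rw [pow_zero, one_eq_id, range_id, top_sup_eq]
  | succ j ih =>
    refine eq_top_iff.mpr ?_
    calc ⊤ = Submodule.map (f ^ j) (range f ⊔ range g) ⊔ range g := by
          rw [h, Submodule.map_top, ih]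
      _ = range (f ^ (j + 1)) ⊔ range (g * f ^ j) ⊔ range g := by
          rw [Submodule.map_sup, ← range_comp, ← range_comp, ← mul_eq_comp, ← mul_eq_comp,
            ← pow_succ, (hfg.pow_left j).eq]
      _ ≤ range (f ^ (j + 1)) ⊔ range g :=
          sup_le (sup_le_sup_left (range_comp_le_range _ _) _) le_sup_right

theorem range_sup_range_ne_top_of_isNilpotent [Nontrivial M] {f g : End R M}
    (hfg : Commute f g) (hf : IsNilpotent f) (hg : IsNilpotent g) : range f ⊔ range g ≠ ⊤ := by
  intro h
  obtain ⟨m, hm⟩ := hf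
  obtain ⟨n, hn⟩ := hg
  have hg_top : range g ⊔ range (0 : End R M) = ⊤ := by
    simpa [hm] using range_pow_sup_range_eq_top hfg h m
  simpa [hn] using range_pow_sup_range_eq_top (Commute.zero_right g) hg_top n

end Module.End

section

variable {K M N : Type*} [Field K] [AddCommGroup M] [Module K M] [AddCommGroup N] [Module K N]

theorem IsNilpotent.eq_zero_or_eq_zero_of_apply_eq_smul {f : End K M} (hf : IsNilpotent f)
    {v : M} {c : K} (h : f v = c • v) : c = 0 ∨ v = 0 := by
  refine or_iff_not_imp_right.mpr fun hv => ?_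
  have hc : f.HasEigenvalue c :=
    End.hasEigenvalue_of_hasEigenvector ⟨End.mem_eigenspace_iff.mpr h, hv⟩
  exact (hc.isNilpotent_of_isNilpotent hf).eq_zero

theorem LinearMap.finrank_range_sup_range_le_two_mul [FiniteDimensional K N]
    (f₁ f₂ : M →ₗ[K] N) :
    finrank K ↥(range f₁ ⊔ range f₂) ≤ 2 * finrank K (range (f₁.prod f₂)) := by
  have h₁ : range f₁ = (range (f₁.prod f₂)).map (fst K N N) := by rw [← range_comp, fst_prod]
  have h₂ : range f₂ = (range (f₁.prod f₂)).map (snd K N N) := by rw [← range_comp, snd_prod]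
  calc finrank K ↥(range f₁ ⊔ range f₂) ≤ finrank K (range f₁) + finrank K (range f₂) :=
        Submodule.finrank_add_le_finrank_add_finrank _ _
    _ ≤ 2 * finrank K (range (f₁.prod f₂)) := by
        rw [h₁, h₂, two_mul]
        exact add_le_add (Submodule.finrank_map_le _ _) (Submodule.finrank_map_le _ _)

/-- Writing `(f₁ w, f₂ w) = φ(w) • (v₁, v₂)`, nilpotency applied to `f₁ v₁ = φ(v₁) • v₁` and
`f₂ v₂ = φ(v₂) • v₂` shows that `f₁` and `f₂` both vanish on `v₁` and `v₂`. -/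
theorem Module.End.range_sup_range_le_ker_inf_ker_of_finrank_range_prod_le_one
    [FiniteDimensional K M] {f₁ f₂ : End K M} (h₁ : IsNilpotent f₁) (h₂ : IsNilpotent f₂)
    (hrank : finrank K (range (f₁.prod f₂)) ≤ 1) : range f₁ ⊔ range f₂ ≤ ker f₁ ⊓ ker f₂ := by
  obtain ⟨⟨v, _⟩, hv⟩ := finrank_le_one_iff.mp hrank
  have hmul : ∀ w, ∃ c : K, f₁ w = c • v.1 ∧ f₂ w = c • v.2 := fun w => by
    obtain ⟨c, hc⟩ := hv ⟨_, mem_range_self _ w⟩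
    have hc := congrArg Subtype.val hc
    exact ⟨c, (congrArg Prod.fst hc).symm, (congrArg Prod.snd hc).symm⟩
  have hv₁ : f₁ v.1 = 0 ∧ f₂ v.1 = 0 := by
    obtain ⟨c, hc₁, hc₂⟩ := hmul v.1
    rcases h₁.eq_zero_or_eq_zero_of_apply_eq_smul hc₁ with rfl | h0
    · simp [hc₁, hc₂]
    · simp [h0]
  have hv₂ : f₁ v.2 = 0 ∧ f₂ v.2 = 0 := by
    obtain ⟨c, hc₁, hc₂⟩ := hmul v.2
    rcases h₂.eq_zero_or_eq_zero_of_apply_eq_smul hc₂ with rfl | h0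
    · simp [hc₁, hc₂]
    · simp [h0]
  refine sup_le (le_inf ?_ ?_) (le_inf ?_ ?_) <;> rintro _ ⟨w, rfl⟩ <;>
    obtain ⟨c, hc₁, hc₂⟩ := hmul w <;> simp [hc₁, hc₂, hv₁, hv₂]

end

theorem finrank_range_sup_add_finrank_range_prod_le {K W₀ W₁ : Type*} [Field K]
    [AddCommGroup W₀] [Module K W₀] [AddCommGroup W₁] [Module K W₁] [FiniteDimensional K W₁]
    (x : W₀ →ₗ[K] W₁) (a₁ a₂ : W₁ →ₗ[K] W₀) (hcomm : a₁ ∘ₗ x ∘ₗ a₂ = a₂ ∘ₗ x ∘ₗ a₁) :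
    finrank K ↥(range (a₁ ∘ₗ x) ⊔ range (a₂ ∘ₗ x)) + finrank K (range ((x ∘ₗ a₁).prod (x ∘ₗ a₂)))
      ≤ 2 * finrank K (range x) := by
  set V := range x
  let γ : V × V →ₗ[K] W₀ := (a₂ ∘ₗ V.subtype).coprod (-(a₁ ∘ₗ V.subtype))
  let δ : W₁ →ₗ[K] V × V := (x.rangeRestrict ∘ₗ a₁).prod (x.rangeRestrict ∘ₗ a₂)
  have hγ : range γ = range (a₁ ∘ₗ x) ⊔ range (a₂ ∘ₗ x) := by
    rw [range_coprod, range_neg, range_comp, range_comp, Submodule.range_subtype, range_comp,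
      range_comp, sup_comm]
  have hδ : ker δ = ker ((x ∘ₗ a₁).prod (x ∘ₗ a₂)) := by
    simp [δ, ker_prod, ker_comp]
  have hγδ : range δ ≤ ker γ := by
    refine range_le_ker_iff.mpr (LinearMap.ext fun w => ?_)
    simpa [γ, δ, add_neg_eq_zero] using (LinearMap.congr_fun hcomm w).symm
  have hγ_rank := finrank_range_add_finrank_ker γ
  rw [hγ, finrank_prod] at hγ_rank
  have hδ_rank := finrank_range_add_finrank_ker δ
  rw [hδ] at hδ_rank
  have hP_rank := finrank_range_add_finrank_ker ((x ∘ₗ a₁).prod (x ∘ₗ a₂))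
  have hγδ_rank := Submodule.finrank_mono hγδ
  omega

theorem stmt11_general {W₀ W₁ : Type*} (k : ℕ) (hk : k ≤ 4)
    [AddCommGroup W₀] [Module ℂ W₀] [FiniteDimensional ℂ W₀]
    [AddCommGroup W₁] [Module ℂ W₁] [FiniteDimensional ℂ W₁]
    (hdim₀ : Module.finrank ℂ W₀ = k)
    (x : W₀ →ₗ[ℂ] W₁) (a₁ a₂ : W₁ →ₗ[ℂ] W₀)
    (hcomm : a₁ ∘ₗ x ∘ₗ a₂ = a₂ ∘ₗ x ∘ₗ a₁)
    (hrange : LinearMap.range x ≤ LinearMap.range (x ∘ₗ a₁) ⊔ LinearMap.range (x ∘ₗ a₂))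
    (hn₁ : IsNilpotent (a₁ ∘ₗ x))
    (hn₂ : IsNilpotent (a₂ ∘ₗ x)) :
    Module.finrank ℂ ↥(LinearMap.range (a₁ ∘ₗ x) ⊔ LinearMap.range (a₂ ∘ₗ x))
      ≤ Module.finrank ℂ ↥(LinearMap.range x) := by
  have h_exact := finrank_range_sup_add_finrank_range_prod_le x a₁ a₂ hcomm
  have h_cover := (Submodule.finrank_mono hrange).trans
    (finrank_range_sup_range_le_two_mul (x ∘ₗ a₁) (x ∘ₗ a₂))
  have h_proper : finrank ℂ ↥(range (a₁ ∘ₗ x) ⊔ range (a₂ ∘ₗ x)) < k ∨ k = 0 := by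
    rcases subsingleton_or_nontrivial W₀ with _ | _
    · exact Or.inr (hdim₀ ▸ finrank_zero_of_subsingleton)
    have hcomm' : Commute (a₁ ∘ₗ x) (a₂ ∘ₗ x) := congrArg (· ∘ₗ x) hcomm
    exact Or.inl <| hdim₀ ▸ Submodule.finrank_lt
      (End.range_sup_range_ne_top_of_isNilpotent hcomm' hn₁ hn₂)
  have h_rank_one : finrank ℂ (range ((x ∘ₗ a₁).prod (x ∘ₗ a₂))) ≤ 1 →
      finrank ℂ ↥(range (a₁ ∘ₗ x) ⊔ range (a₂ ∘ₗ x)) ≤ finrank ℂ (ker x) := fun h_one => by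
    have h_kill := hrange.trans (End.range_sup_range_le_ker_inf_ker_of_finrank_range_prod_le_one
      (isNilpotent_comp_comm hn₁) (isNilpotent_comp_comm hn₂) h_one)
    have h₁ := range_le_ker_iff.mp (h_kill.trans inf_le_left)
    have h₂ := range_le_ker_iff.mp (h_kill.trans inf_le_right)
    exact Submodule.finrank_mono (sup_le (range_le_ker_iff.mpr h₁) (range_le_ker_iff.mpr h₂))
  have h_rank := finrank_range_add_finrank_ker x
  omega

/-- Let `W₀, W₁` be complex vector spaces with `dim W₀ = dim W₁ = k ≤ 4`, and
`x : W₀ → W₁`, `a₁, a₂ : W₁ → W₀` linear maps with `a₁∘x∘a₂ = a₂∘x∘a₁`,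
`range x ⊆ range(x∘a₁) + range(x∘a₂)`, and `a₁∘x`, `a₂∘x` nilpotent. Then
`dim (range(a₁∘x) + range(a₂∘x)) ≤ dim (range x)`. -/
theorem stmt11 {W₀ W₁ : Type*} (k : ℕ) (hk : k ≤ 4)
    [AddCommGroup W₀] [Module ℂ W₀] [FiniteDimensional ℂ W₀]
    [AddCommGroup W₁] [Module ℂ W₁] [FiniteDimensional ℂ W₁]
    (hdim₀ : Module.finrank ℂ W₀ = k) (hdim₁ : Module.finrank ℂ W₁ = k)
    (x : W₀ →ₗ[ℂ] W₁) (a₁ a₂ : W₁ →ₗ[ℂ] W₀)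
    (hcomm : a₁ ∘ₗ x ∘ₗ a₂ = a₂ ∘ₗ x ∘ₗ a₁)
    (hrange : LinearMap.range x ≤ LinearMap.range (x ∘ₗ a₁) ⊔ LinearMap.range (x ∘ₗ a₂))
    (hn₁ : IsNilpotent (a₁ ∘ₗ x))
    (hn₂ : IsNilpotent (a₂ ∘ₗ x)) :
    Module.finrank ℂ ↥(LinearMap.range (a₁ ∘ₗ x) ⊔ LinearMap.range (a₂ ∘ₗ x))
      ≤ Module.finrank ℂ ↥(LinearMap.range x) :=
  stmt11_general k hk hdim₀ x a₁ a₂ hcomm hrange hn₁ hn₂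
end

section
/- Fix k, r ∈ ℕ and ζ ∈ ℝ. Let E_k^r(ζ) be the set of S⁴-ADHM data (a₁,a₂,b,c) at level −ζ which moreover satisfy the non-degeneracy conditions C1 and C2, with the subspace topology. Then the continuous map ι : E_k^r(ζ) → E_k^{r+2k}(ζ) sending (a₁,a₂,b,c) to (a₁, a₂, (b 0 0), (c; 0; 0)) — where b is extended by two k×k zero blocks of columns and c by two k×k zero blocks of rows — is null-homotopic, i.e. homotopic through continuous maps to a constant map. -/
open Matrix

/-- The configuration space for S⁴-ADHM data:
`M_k(ℂ) × M_k(ℂ) × M_{k×r}(ℂ) × M_{r×k}(ℂ)`. -/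
abbrev ConfS4 (k r : ℕ) :=
  Matrix (Fin k) (Fin k) ℂ × Matrix (Fin k) (Fin k) ℂ ×
    Matrix (Fin k) (Fin r) ℂ × Matrix (Fin r) (Fin k) ℂ

/-- An S⁴-ADHM datum at level `−ζ`: `(a₁,a₂,b,c)` with `[a₁,a₂] + bc = 0` and
`[a₁,a₁*] + [a₂,a₂*] + bb* − c*c = −ζ·1`. -/
def IsS4ADHM {k r : ℕ} (ζ : ℝ) (p : ConfS4 k r) : Prop :=
  p.1 * p.2.1 - p.2.1 * p.1 + p.2.2.1 * p.2.2.2 = 0 ∧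
  (p.1 * p.1ᴴ - p.1ᴴ * p.1) + (p.2.1 * p.2.1ᴴ - p.2.1ᴴ * p.2.1)
      + p.2.2.1 * p.2.2.1ᴴ - p.2.2.2ᴴ * p.2.2.2
    = (-ζ : ℂ) • (1 : Matrix (Fin k) (Fin k) ℂ)

/-- The non-degeneracy conditions C1 and C2 for an S⁴-ADHM configuration
`(a₁,a₂,b,c)`, viewed through the linear maps `a₁, a₂ : W → W`, `b : ℂʳ → W`,
`c : W → ℂʳ` with `W = ℂᵏ`: no proper subspace `W' ⊊ W` contains `range b` and is
invariant under `a₁, a₂`, and no nonzero subspace `W' ⊆ ker c` is invariant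
under `a₁, a₂`. -/
def S4NonDeg {k r : ℕ} (p : ConfS4 k r) : Prop :=
  (¬ ∃ W' : Submodule ℂ (Fin k → ℂ), W' ≠ ⊤ ∧
      LinearMap.range p.2.2.1.mulVecLin ≤ W' ∧
      W'.map p.1.mulVecLin ≤ W' ∧ W'.map p.2.1.mulVecLin ≤ W') ∧
  (¬ ∃ W' : Submodule ℂ (Fin k → ℂ), W' ≠ ⊥ ∧
      W' ≤ LinearMap.ker p.2.2.2.mulVecLin ∧
      W'.map p.1.mulVecLin ≤ W' ∧ W'.map p.2.1.mulVecLin ≤ W')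

/-- Extend a `k × r` matrix by `m` zero columns. -/
def extendCols {k r : ℕ} (m : ℕ) (b : Matrix (Fin k) (Fin r) ℂ) :
    Matrix (Fin k) (Fin (r + m)) ℂ :=
  Matrix.of fun i j => if h : (j : ℕ) < r then b i ⟨j, h⟩ else 0

/-- Extend an `r × k` matrix by `m` zero rows. -/
def extendRows {k r : ℕ} (m : ℕ) (c : Matrix (Fin r) (Fin k) ℂ) :
    Matrix (Fin (r + m)) (Fin k) ℂ :=
  Matrix.of fun i j => if h : (i : ℕ) < r then c ⟨i, h⟩ j else 0

/-- The rank-stabilization map `(a₁,a₂,b,c) ↦ (a₁, a₂, (b 0 ⋯ 0), (c; 0; ⋯; 0))`. -/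
def extS4 {k r : ℕ} (m : ℕ) (p : ConfS4 k r) : ConfS4 k (r + m) :=
  (p.1, p.2.1, extendCols m p.2.2.1, extendRows m p.2.2.2)

/-!
Append to `(b, c)` framing blocks `B = u·(1 0)` and `C = v·(0 1)ᵀ`. Since `BC = 0` and
`BB* − C*C = (u² − v²)·1`, appending them shifts the level of an ADHM datum by `v² − u²`, while
scaling the whole datum by `1 − t` multiplies the level by `(1 − t)²`. With
`u² = t + t(2 − t)ζ⁻` and `v² = t + t(2 − t)ζ⁺` the two effects cancel, so
`t ↦ ((1 − t)·p, B, C)` stays at level `−ζ`. It starts at the zero-padded datum, and for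
`t > 0` the new `b` is surjective and the new `c` injective, which gives C1 and C2 whatever
`a₁, a₂` are. At `t = 1` the datum no longer depends on `p`.
-/

namespace Matrix

variable {m ι : Type*} {r n : ℕ} (e : Fin r ⊕ ι ≃ Fin n)

def appendCols (b : Matrix m (Fin r) ℂ) (B : Matrix m ι ℂ) : Matrix m (Fin n) ℂ :=
  (fromCols b B).submatrix id e.symm

def appendRows (c : Matrix (Fin r) m ℂ) (C : Matrix ι m ℂ) : Matrix (Fin n) m ℂ :=
  (fromRows c C).submatrix e.symm id

lemma appendCols_mul_appendRows [Fintype ι] {l : Type*} (b : Matrix m (Fin r) ℂ) (B : Matrix m ι ℂ)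
    (c : Matrix (Fin r) l ℂ) (C : Matrix ι l ℂ) :
    appendCols e b B * appendRows e c C = b * c + B * C := by
  simp [appendCols, appendRows, fromCols_mul_fromRows]

lemma conjTranspose_appendCols (b : Matrix m (Fin r) ℂ) (B : Matrix m ι ℂ) :
    (appendCols e b B)ᴴ = appendRows e bᴴ Bᴴ := by
  simp [appendCols, appendRows, conjTranspose_submatrix,
    conjTranspose_fromCols_eq_fromRows_conjTranspose]

lemma conjTranspose_appendRows (c : Matrix (Fin r) m ℂ) (C : Matrix ι m ℂ) :
    (appendRows e c C)ᴴ = appendCols e cᴴ Cᴴ := by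
  simp [appendCols, appendRows, conjTranspose_submatrix,
    conjTranspose_fromRows_eq_fromCols_conjTranspose]

lemma appendCols_mulVec [Fintype ι] (b : Matrix m (Fin r) ℂ) (B : Matrix m ι ℂ)
    (v : Fin r ⊕ ι → ℂ) :
    appendCols e b B *ᵥ (v ∘ e.symm) = b *ᵥ (v ∘ Sum.inl) + B *ᵥ (v ∘ Sum.inr) := by
  simp [appendCols, submatrix_mulVec_equiv, Function.comp_assoc]

lemma range_mulVecLin_le_appendCols_left [Fintype ι] (b : Matrix m (Fin r) ℂ) (B : Matrix m ι ℂ) :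
    LinearMap.range b.mulVecLin ≤ LinearMap.range (appendCols e b B).mulVecLin := by
  rintro - ⟨w, rfl⟩
  refine ⟨Sum.elim w 0 ∘ e.symm, ?_⟩
  simp [appendCols_mulVec]

lemma range_mulVecLin_le_appendCols_right [Fintype ι] (b : Matrix m (Fin r) ℂ) (B : Matrix m ι ℂ) :
    LinearMap.range B.mulVecLin ≤ LinearMap.range (appendCols e b B).mulVecLin := by
  rintro - ⟨w, rfl⟩
  refine ⟨Sum.elim 0 w ∘ e.symm, ?_⟩
  simp [appendCols_mulVec]

lemma appendRows_mulVec [Fintype m] (c : Matrix (Fin r) m ℂ) (C : Matrix ι m ℂ) (v : m → ℂ) :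
    appendRows e c C *ᵥ v = Sum.elim (c *ᵥ v) (C *ᵥ v) ∘ e.symm := by
  rw [← fromRows_mulVec]
  rfl

lemma ker_mulVecLin_appendRows_le_left [Fintype m] (c : Matrix (Fin r) m ℂ) (C : Matrix ι m ℂ) :
    LinearMap.ker (appendRows e c C).mulVecLin ≤ LinearMap.ker c.mulVecLin := by
  intro v hv
  simp only [LinearMap.mem_ker, mulVecLin_apply, appendRows_mulVec] at hv ⊢
  funext i
  simpa using congrFun hv (e (Sum.inl i))

lemma ker_mulVecLin_appendRows_le_right [Fintype m] (c : Matrix (Fin r) m ℂ) (C : Matrix ι m ℂ) :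
    LinearMap.ker (appendRows e c C).mulVecLin ≤ LinearMap.ker C.mulVecLin := by
  intro v hv
  simp only [LinearMap.mem_ker, mulVecLin_apply, appendRows_mulVec] at hv ⊢
  funext i
  simpa using congrFun hv (e (Sum.inr i))

lemma range_mulVecLin_eq_top_of_mul_eq_one {m n : Type*} [Fintype m] [DecidableEq m]
    [Fintype n] {A : Matrix m n ℂ} {B : Matrix n m ℂ} (h : A * B = 1) :
    LinearMap.range A.mulVecLin = ⊤ :=
  LinearMap.range_eq_top.mpr (mulVec_surjective_iff_exists_right_inverse.mpr ⟨B, h⟩)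

lemma ker_mulVecLin_eq_bot_of_mul_eq_one {m n : Type*} [Fintype m] [DecidableEq n]
    [Fintype n] {A : Matrix m n ℂ} {B : Matrix n m ℂ} (h : B * A = 1) :
    LinearMap.ker A.mulVecLin = ⊥ := by
  refine LinearMap.ker_eq_bot'.mpr fun v hv => ?_
  rw [mulVecLin_apply] at hv
  rw [← one_mulVec v, ← h, ← mulVec_mulVec, hv, mulVec_zero]

end Matrix

lemma Continuous.matrix_fromCols {X m n₁ n₂ R : Type*} [TopologicalSpace X]
    [TopologicalSpace R] {b : X → Matrix m n₁ R} {B : X → Matrix m n₂ R}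
    (hb : Continuous b) (hB : Continuous B) :
    Continuous fun x => Matrix.fromCols (b x) (B x) := by
  refine continuous_matrix fun i j => ?_
  rcases j with j | j
  · simpa using hb.matrix_elem i j
  · simpa using hB.matrix_elem i j

lemma Continuous.matrix_fromRows {X m₁ m₂ n R : Type*} [TopologicalSpace X]
    [TopologicalSpace R] {c : X → Matrix m₁ n R} {C : X → Matrix m₂ n R}
    (hc : Continuous c) (hC : Continuous C) :
    Continuous fun x => Matrix.fromRows (c x) (C x) := by
  refine continuous_matrix fun i j => ?_
  rcases i with i | i
  · simpa using hc.matrix_elem i j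
  · simpa using hC.matrix_elem i j

@[fun_prop]
lemma Continuous.matrix_appendCols {X m ι : Type*} [TopologicalSpace X] {r n : ℕ}
    (e : Fin r ⊕ ι ≃ Fin n) {b : X → Matrix m (Fin r) ℂ} {B : X → Matrix m ι ℂ}
    (hb : Continuous b) (hB : Continuous B) :
    Continuous fun x => (b x).appendCols e (B x) :=
  (hb.matrix_fromCols hB).matrix_submatrix _ _

@[fun_prop]
lemma Continuous.matrix_appendRows {X m ι : Type*} [TopologicalSpace X] {r n : ℕ}
    (e : Fin r ⊕ ι ≃ Fin n) {c : X → Matrix (Fin r) m ℂ} {C : X → Matrix ι m ℂ}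
    (hc : Continuous c) (hC : Continuous C) :
    Continuous fun x => (c x).appendRows e (C x) :=
  (hc.matrix_fromRows hC).matrix_submatrix _ _

namespace ConfS4

def append {k r n : ℕ} {ι : Type*} (e : Fin r ⊕ ι ≃ Fin n) (p : ConfS4 k r) (B : Matrix (Fin k) ι ℂ)
    (C : Matrix ι (Fin k) ℂ) : ConfS4 k n :=
  (p.1, p.2.1, p.2.2.1.appendCols e B, p.2.2.2.appendRows e C)

end ConfS4

section Stabilization

open ConfS4

variable {k r n : ℕ} {ι : Type*} [Fintype ι]

lemma isS4ADHM_zero : IsS4ADHM 0 (0 : ConfS4 k r) := by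
  simp [IsS4ADHM]

lemma IsS4ADHM.smul {ζ : ℝ} {p : ConfS4 k r} (hp : IsS4ADHM ζ p) (s : ℝ) :
    IsS4ADHM (s ^ 2 * ζ) (s • p) := by
  obtain ⟨a₁, a₂, b, c⟩ := p
  obtain ⟨hcomm, hmoment⟩ := hp
  dsimp only at hcomm hmoment
  constructor
  · simp only [Prod.smul_mk, Matrix.smul_mul, Matrix.mul_smul, smul_smul, ← smul_sub,
      ← smul_add, hcomm, smul_zero]
  · simp only [Prod.smul_mk, conjTranspose_smul, star_trivial, Matrix.smul_mul,
      Matrix.mul_smul, smul_smul, ← smul_sub, ← smul_add, hmoment]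
    rw [← Complex.coe_smul, smul_smul]
    congr 1
    push_cast
    ring

lemma IsS4ADHM.append {ζ ζ' : ℝ} {p : ConfS4 k r} (hp : IsS4ADHM ζ p) (e : Fin r ⊕ ι ≃ Fin n)
    {B : Matrix (Fin k) ι ℂ} {C : Matrix ι (Fin k) ℂ} (hBC : B * C = 0)
    (hμ : B * Bᴴ - Cᴴ * C = (ζ - ζ') • (1 : Matrix (Fin k) (Fin k) ℂ)) :
    IsS4ADHM ζ' (p.append e B C) := by
  obtain ⟨a₁, a₂, b, c⟩ := p
  obtain ⟨hcomm, hmoment⟩ := hp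
  constructor
  · simp only [ConfS4.append, appendCols_mul_appendRows, hBC, add_zero]
    exact hcomm
  · simp only [ConfS4.append, conjTranspose_appendCols, conjTranspose_appendRows,
      appendCols_mul_appendRows]
    dsimp only at hmoment
    calc _ = (a₁ * a₁ᴴ - a₁ᴴ * a₁ + (a₂ * a₂ᴴ - a₂ᴴ * a₂) + b * bᴴ - cᴴ * c)
          + (B * Bᴴ - Cᴴ * C) := by abel
      _ = _ := by
        rw [hmoment, hμ, ← Complex.coe_smul, ← add_smul]
        congr 1
        push_cast
        ring

lemma s4NonDeg_of_range_eq_top_of_ker_eq_bot (p : ConfS4 k n)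
    (hb : LinearMap.range p.2.2.1.mulVecLin = ⊤) (hc : LinearMap.ker p.2.2.2.mulVecLin = ⊥) :
    S4NonDeg p :=
  ⟨fun ⟨_, hW, hbW, _⟩ => hW (top_le_iff.mp (hb ▸ hbW)),
    fun ⟨_, hW, hcW, _⟩ => hW (le_bot_iff.mp (hc ▸ hcW))⟩

lemma S4NonDeg.append {p : ConfS4 k r} (hp : S4NonDeg p) (e : Fin r ⊕ ι ≃ Fin n)
    (B : Matrix (Fin k) ι ℂ) (C : Matrix ι (Fin k) ℂ) : S4NonDeg (p.append e B C) :=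
  ⟨fun ⟨W, hW, hbW, h₁, h₂⟩ =>
      hp.1 ⟨W, hW, (range_mulVecLin_le_appendCols_left e _ B).trans hbW, h₁, h₂⟩,
    fun ⟨W, hW, hcW, h₁, h₂⟩ =>
      hp.2 ⟨W, hW, hcW.trans (ker_mulVecLin_appendRows_le_left e _ C), h₁, h₂⟩⟩

lemma s4NonDeg_append_of_range_eq_top_of_ker_eq_bot (p : ConfS4 k r) (e : Fin r ⊕ ι ≃ Fin n)
    {B : Matrix (Fin k) ι ℂ} {C : Matrix ι (Fin k) ℂ} (hB : LinearMap.range B.mulVecLin = ⊤)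
    (hC : LinearMap.ker C.mulVecLin = ⊥) : S4NonDeg (p.append e B C) :=
  s4NonDeg_of_range_eq_top_of_ker_eq_bot _
    (top_le_iff.mp (hB ▸ range_mulVecLin_le_appendCols_right e _ B))
    (le_bot_iff.mp (hC ▸ ker_mulVecLin_appendRows_le_right e _ C))

def framingCols (k : ℕ) : Matrix (Fin k) (Fin k ⊕ Fin k) ℂ := fromCols 1 0

def framingRows (k : ℕ) : Matrix (Fin k ⊕ Fin k) (Fin k) ℂ := fromRows 0 1

lemma smul_framingCols_mul_smul_framingRows (u v : ℝ) :
    (u • framingCols k) * (v • framingRows k) = 0 := by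
  simp [framingCols, framingRows, fromCols_mul_fromRows]

lemma smul_framingCols_moment (u v : ℝ) :
    (u • framingCols k) * (u • framingCols k)ᴴ - (v • framingRows k)ᴴ * (v • framingRows k)
      = (u ^ 2 - v ^ 2) • (1 : Matrix (Fin k) (Fin k) ℂ) := by
  simp only [conjTranspose_smul, star_trivial, Matrix.smul_mul, Matrix.mul_smul, smul_smul,
    framingCols, framingRows, conjTranspose_fromCols_eq_fromRows_conjTranspose,
    conjTranspose_fromRows_eq_fromCols_conjTranspose, fromCols_mul_fromRows]
  simp only [conjTranspose_one, conjTranspose_zero, mul_one, mul_zero, add_zero, zero_add,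
    sq, sub_smul]

lemma range_mulVecLin_smul_framingCols {u : ℝ} (hu : u ≠ 0) :
    LinearMap.range (u • framingCols k).mulVecLin = ⊤ :=
  range_mulVecLin_eq_top_of_mul_eq_one (B := u⁻¹ • (framingCols k)ᴴ) <| by
    simp [framingCols, Matrix.smul_mul, Matrix.mul_smul, smul_smul, hu,
      conjTranspose_fromCols_eq_fromRows_conjTranspose, fromCols_mul_fromRows]

lemma ker_mulVecLin_smul_framingRows {v : ℝ} (hv : v ≠ 0) :
    LinearMap.ker (v • framingRows k).mulVecLin = ⊥ :=
  ker_mulVecLin_eq_bot_of_mul_eq_one (B := v⁻¹ • (framingRows k)ᴴ) <| by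
    simp [framingRows, Matrix.smul_mul, Matrix.mul_smul, smul_smul, hv,
      conjTranspose_fromRows_eq_fromCols_conjTranspose, fromCols_mul_fromRows]

def stabEquiv (k r : ℕ) : Fin r ⊕ (Fin k ⊕ Fin k) ≃ Fin (r + 2 * k) :=
  (Equiv.sumCongr (Equiv.refl _) (finSumFinEquiv.trans (finCongr (two_mul k).symm))).trans
    finSumFinEquiv

lemma extS4_eq_append (p : ConfS4 k r) : extS4 (2 * k) p = p.append (stabEquiv k r) 0 0 := by
  obtain ⟨a₁, a₂, b, c⟩ := p
  refine Prod.ext rfl (Prod.ext rfl (Prod.ext ?_ ?_)) <;> ext i j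
  · obtain ⟨j, rfl⟩ := (stabEquiv k r).surjective j
    rcases j with j | j <;> simp [extS4, extendCols, ConfS4.append, appendCols, stabEquiv]
  · obtain ⟨i, rfl⟩ := (stabEquiv k r).surjective i
    rcases i with i | i <;> simp [extS4, extendRows, ConfS4.append, appendRows, stabEquiv]

noncomputable def framingWeight (a t : ℝ) : ℝ := √(t + t * (2 - t) * a)

lemma framingWeight_zero (a : ℝ) : framingWeight a 0 = 0 := by
  simp [framingWeight]

lemma framingWeight_sq {a t : ℝ} (ha : 0 ≤ a) (ht0 : 0 ≤ t) (ht2 : t ≤ 2) :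
    framingWeight a t ^ 2 = t + t * (2 - t) * a :=
  Real.sq_sqrt (by positivity)

lemma framingWeight_pos {a t : ℝ} (ha : 0 ≤ a) (ht0 : 0 < t) (ht2 : t ≤ 2) :
    0 < framingWeight a t :=
  Real.sqrt_pos.mpr (by positivity)

@[fun_prop]
lemma continuous_framingWeight (a : ℝ) : Continuous (framingWeight a) := by
  unfold framingWeight
  fun_prop

noncomputable def stabPath (ζ t : ℝ) (p : ConfS4 k r) : ConfS4 k (r + 2 * k) :=
  ((1 - t) • p).append (stabEquiv k r) (framingWeight ζ⁻ t • framingCols k)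
    (framingWeight ζ⁺ t • framingRows k)

lemma stabPath_zero (ζ : ℝ) (p : ConfS4 k r) : stabPath ζ 0 p = extS4 (2 * k) p := by
  simp [stabPath, framingWeight_zero, extS4_eq_append]

lemma stabPath_one (ζ : ℝ) (p : ConfS4 k r) : stabPath ζ 1 p = stabPath ζ 1 0 := by
  simp [stabPath]

lemma continuous_stabPath (ζ : ℝ) :
    Continuous fun x : ℝ × ConfS4 k r => stabPath ζ x.1 x.2 := by
  unfold stabPath ConfS4.append
  fun_prop

lemma isS4ADHM_stabPath {ζ₀ ζ t : ℝ} (ht0 : 0 ≤ t) (ht1 : t ≤ 1) {p : ConfS4 k r}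
    (hp : IsS4ADHM ζ₀ p) : IsS4ADHM ((1 - t) ^ 2 * ζ₀ + t * (2 - t) * ζ) (stabPath ζ t p) := by
  refine (hp.smul (1 - t)).append _ (smul_framingCols_mul_smul_framingRows _ _) ?_
  rw [smul_framingCols_moment, framingWeight_sq (negPart_nonneg ζ) ht0 (by linarith),
    framingWeight_sq (posPart_nonneg ζ) ht0 (by linarith)]
  congr 1
  linear_combination (-(t * (2 - t))) * posPart_sub_negPart ζ

lemma s4NonDeg_stabPath_of_pos {ζ t : ℝ} (ht0 : 0 < t) (ht1 : t ≤ 1) (p : ConfS4 k r) :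
    S4NonDeg (stabPath ζ t p) :=
  s4NonDeg_append_of_range_eq_top_of_ker_eq_bot _ _
    (range_mulVecLin_smul_framingCols (framingWeight_pos (negPart_nonneg ζ) ht0 (by linarith)).ne')
    (ker_mulVecLin_smul_framingRows (framingWeight_pos (posPart_nonneg ζ) ht0 (by linarith)).ne')

lemma stabPath_mem {ζ t : ℝ} (ht : t ∈ Set.Icc (0 : ℝ) 1) {p : ConfS4 k r}
    (hp : IsS4ADHM ζ p ∧ S4NonDeg p) :
    IsS4ADHM ζ (stabPath ζ t p) ∧ S4NonDeg (stabPath ζ t p) := by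
  refine ⟨?_, ?_⟩
  · convert isS4ADHM_stabPath ht.1 ht.2 hp.1 using 1
    ring
  · rcases ht.1.eq_or_lt with rfl | ht0
    · rw [stabPath_zero, extS4_eq_append]
      exact hp.2.append _ _ _
    · exact s4NonDeg_stabPath_of_pos ht0 ht.2 p

lemma stabPath_one_mem (ζ : ℝ) :
    IsS4ADHM ζ (stabPath ζ 1 (0 : ConfS4 k r)) ∧ S4NonDeg (stabPath ζ 1 (0 : ConfS4 k r)) := by
  refine ⟨?_, s4NonDeg_stabPath_of_pos one_pos le_rfl 0⟩
  convert isS4ADHM_stabPath zero_le_one le_rfl (isS4ADHM_zero (k := k) (r := r)) using 1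
  ring

end Stabilization

/-- The inclusion `E_k^r(ζ) → E_k^{r+2k}(ζ)`, `(a₁,a₂,b,c) ↦ (a₁,a₂,(b 0 0),(c;0;0))`,
of the spaces of non-degenerate S⁴-ADHM data at level `−ζ` is a well-defined
continuous map and is null-homotopic. -/
theorem stmt14 (k r : ℕ) (ζ : ℝ) :
    ∃ f : C({p : ConfS4 k r // IsS4ADHM ζ p ∧ S4NonDeg p},
            {p : ConfS4 k (r + 2 * k) // IsS4ADHM ζ p ∧ S4NonDeg p}),
      (∀ p, (f p : ConfS4 k (r + 2 * k)) = extS4 (2 * k) (p : ConfS4 k r)) ∧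
      ∃ q, f.Homotopic (ContinuousMap.const _ q) := by
  let H : C(unitInterval × {p : ConfS4 k r // IsS4ADHM ζ p ∧ S4NonDeg p},
      {p : ConfS4 k (r + 2 * k) // IsS4ADHM ζ p ∧ S4NonDeg p}) :=
    ⟨fun x => ⟨stabPath ζ x.1 x.2, stabPath_mem x.1.2 x.2.2⟩,
      ((continuous_stabPath ζ).comp
        ((continuous_subtype_val.comp continuous_fst).prodMk
          (continuous_subtype_val.comp continuous_snd))).subtype_mk _⟩
  refine ⟨H.curry 0, fun p => stabPath_zero ζ p.1, ⟨_, stabPath_one_mem ζ⟩, ⟨?_⟩⟩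
  exact
    { toContinuousMap := H
      map_zero_left := fun _ => rfl
      map_one_left := fun p => Subtype.ext (stabPath_one ζ p.1) }
end
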